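/- arXiv:2012.10302 — 6 statements merged into one kernel-verified Lean document; each statement's English description precedes it below -/
import Mathlib

section
/- Let n ∈ ℕ and let f : (−1,1) → ℝ be infinitely differentiable. Suppose there are constants M > A > 0 such that max_{0 ≤ j ≤ n} |f^{(j)}(0)| ≥ A and |f^{(j)}(x)| ≤ M for every 0 ≤ j ≤ n+1 and every x ∈ (−1,1). Then f has at most n distinct zeros in the interval [−A/(2M), A/(2M)]. -/
open Set

lemma rolle_finset (a b : ℝ) (g g' : ℝ → ℝ)
    (hg : ∀ x ∈ Icc a b, HasDerivAt g (g' x) x)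
    (s : Finset ℝ) :
    (∀ x ∈ s, x ∈ Icc a b) → (∀ x ∈ s, g x = 0) →
    ∃ t : Finset ℝ, s.card ≤ t.card + 1 ∧
      (∀ x ∈ t, x ∈ Icc a b ∧ g' x = 0) ∧
      (∀ x ∈ t, ∃ u ∈ s, u < x) := by
  classical
  induction s using Finset.strongInduction with
  | _ s ih =>
    intro hsub hz
    by_cases h1 : s.card ≤ 1
    · exact ⟨∅, by simpa using h1, by simp, by simp⟩
    · push_neg at h1
      have hne : s.Nonempty := Finset.card_pos.mp (by omega)
      set m := s.min' hne with hm
      have hmem : m ∈ s := s.min'_mem hne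
      set s' := s.erase m with hs'
      have hcard' : s'.card = s.card - 1 := Finset.card_erase_of_mem hmem
      have hne' : s'.Nonempty := Finset.card_pos.mp (by omega)
      set m' := s'.min' hne' with hm'
      have hm'mem' : m' ∈ s' := s'.min'_mem hne'
      have hm'mem : m' ∈ s := Finset.mem_of_mem_erase hm'mem'
      have hmm' : m < m' :=
        lt_of_le_of_ne (Finset.min'_le s m' hm'mem) (Ne.symm (Finset.ne_of_mem_erase hm'mem'))
      have hsubI : Icc m m' ⊆ Icc a b := by
        apply Icc_subset_Icc (hsub m hmem).1 (hsub m' hm'mem).2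
      have hcont : ContinuousOn g (Icc m m') := fun x hx =>
        ((hg x (hsubI hx)).continuousAt).continuousWithinAt
      obtain ⟨c, hc, hc0⟩ := exists_hasDerivAt_eq_zero hmm' hcont
        ((hz m hmem).trans (hz m' hm'mem).symm)
        (fun x hx => hg x (hsubI (Ioo_subset_Icc_self hx)))
      obtain ⟨t', ht'card, ht'zero, ht'low⟩ := ih s' (Finset.erase_ssubset hmem)
        (fun x hx => hsub x (Finset.mem_of_mem_erase hx))
        (fun x hx => hz x (Finset.mem_of_mem_erase hx))
      have hcnot : c ∉ t' := by
        intro hcmem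
        obtain ⟨u, hu, hulv⟩ := ht'low c hcmem
        have : m' ≤ u := Finset.min'_le s' u hu
        linarith [hc.2]
      refine ⟨insert c t', ?_, ?_, ?_⟩
      · rw [Finset.card_insert_of_notMem hcnot]; omega
      · intro x hx
        rcases Finset.mem_insert.mp hx with rfl | hx
        · exact ⟨hsubI (Ioo_subset_Icc_self hc), hc0⟩
        · exact ht'zero x hx
      · intro x hx
        rcases Finset.mem_insert.mp hx with rfl | hx
        · exact ⟨m, hmem, hc.1⟩
        · obtain ⟨u, hu, hul⟩ := ht'low x hx
          exact ⟨u, Finset.mem_of_mem_erase hu, hul⟩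

/-- Lemma 5.8 of Donnelly–Fefferman, as in the paper:
if `f` is smooth on `(-1,1)`, some derivative of order `≤ n` at `0` has absolute
value at least `A`, and all derivatives of order `≤ n+1` are bounded by `M` on
`(-1,1)` (with `M > A > 0`), then `f` has at most `n` distinct zeros in
`[-A/(2M), A/(2M)]`. -/
theorem stmt0 (n : ℕ) (f : ℝ → ℝ) (A M : ℝ) (hA : 0 < A) (hAM : A < M)
    (hf : ContDiffOn ℝ (⊤ : ℕ∞) f (Set.Ioo (-1 : ℝ) 1))
    (hA' : ∃ j ≤ n, A ≤ |iteratedDerivWithin j f (Set.Ioo (-1 : ℝ) 1) 0|)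
    (hM : ∀ j ≤ n + 1, ∀ x ∈ Set.Ioo (-1 : ℝ) 1,
      |iteratedDerivWithin j f (Set.Ioo (-1 : ℝ) 1) x| ≤ M)
    (s : Finset ℝ)
    (hs : ∀ x ∈ s, x ∈ Set.Icc (-(A / (2 * M))) (A / (2 * M)) ∧ f x = 0) :
    s.card ≤ n := by
  classical
  set S : Set ℝ := Ioo (-1 : ℝ) 1 with hS
  have hM0 : (0:ℝ) < M := hA.trans hAM
  set r : ℝ := A / (2 * M) with hr
  have hr0 : 0 < r := by positivity
  have hrhalf : r < 1 / 2 := by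
    rw [hr, div_lt_div_iff₀ (by positivity) (by norm_num)]
    nlinarith
  have hIccS : Icc (-r) r ⊆ S := by
    intro x hx
    constructor <;> [linarith [hx.1]; linarith [hx.2]]
  have hSopen : IsOpen S := isOpen_Ioo
  have hSuniq : UniqueDiffOn ℝ S := hSopen.uniqueDiffOn
  set g : ℕ → ℝ → ℝ := fun j => iteratedDerivWithin j f S with hg
  -- derivative of g j is g (j+1) at points of S
  have hderiv : ∀ j, ∀ x ∈ S, HasDerivAt (g j) (g (j+1) x) x := by
    intro j x hx
    have hdiff : DifferentiableWithinAt ℝ (g j) S x :=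
      (hf.differentiableOn_iteratedDerivWithin (by exact_mod_cast ENat.coe_lt_top j)
        hSuniq) x hx
    have h1 : HasDerivWithinAt (g j) (derivWithin (g j) S x) S x :=
      hdiff.hasDerivWithinAt
    have h2 : derivWithin (g j) S x = g (j+1) x := by
      rw [hg]; simp only []
      rw [iteratedDerivWithin_succ]
    rw [h2] at h1
    exact h1.hasDerivAt (hSopen.mem_nhds hx)
  -- iterated Rolle
  have claim : ∀ j, ∃ t : Finset ℝ, s.card ≤ t.card + j ∧
      ∀ x ∈ t, x ∈ Icc (-r) r ∧ g j x = 0 := by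
    intro j
    induction j with
    | zero =>
      refine ⟨s, by omega, fun x hx => ⟨(hs x hx).1, ?_⟩⟩
      rw [hg]; simp only [iteratedDerivWithin_zero]; exact (hs x hx).2
    | succ j ihj =>
      obtain ⟨t, htc, htz⟩ := ihj
      obtain ⟨t', ht'c, ht'z, _⟩ := rolle_finset (-r) r (g j) (g (j+1))
        (fun x hx => hderiv j x (hIccS hx)) t
        (fun x hx => (htz x hx).1) (fun x hx => (htz x hx).2)
      exact ⟨t', by omega, ht'z⟩
  by_contra hcon
  push_neg at hcon
  obtain ⟨j, hjn, hjA⟩ := hA'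
  obtain ⟨t, htc, htz⟩ := claim j
  have htne : t.Nonempty := Finset.card_pos.mp (by omega)
  obtain ⟨ξ, hξ⟩ := htne
  obtain ⟨hξmem, hξ0⟩ := htz ξ hξ
  -- MVT bound
  have hmvt := Convex.norm_image_sub_le_of_norm_hasDerivWithin_le
    (f := g j) (f' := g (j+1)) (C := M) (s := S)
    (fun x hx => (hderiv j x hx).hasDerivWithinAt)
    (fun x hx => by
      have := hM (j+1) (by omega) x hx
      simpa [Real.norm_eq_abs] using this)
    (convex_Ioo _ _) (hIccS hξmem)
    (hIccS (⟨by linarith, le_of_lt hr0⟩ : (0:ℝ) ∈ Icc (-r) r))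
  have hxi : |ξ| ≤ r := abs_le.mpr ⟨hξmem.1, hξmem.2⟩
  have h1 : |g j 0 - g j ξ| ≤ M * |(0:ℝ) - ξ| := by
    simpa [Real.norm_eq_abs] using hmvt
  have h0 : |(0:ℝ) - ξ| = |ξ| := by rw [zero_sub, abs_neg]
  rw [h0] at h1
  have h2 : M * |ξ| ≤ M * r := by nlinarith
  have h3 : M * r = A / 2 := by
    rw [hr]; field_simp
  have h4 : |g j 0| ≤ A / 2 := by
    have : g j 0 - g j ξ = g j 0 := by rw [hξ0]; ring
    rw [this] at h1; linarith
  linarith [hjA]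
end

section
/- Let n ∈ ℕ and let f : 𝔻 → ℝ be infinitely differentiable on the open unit disc 𝔻 ⊆ ℝ² centred at the origin. Suppose there are constants M > A > 0 such that min(d₁(f,(0,0)), d₂(f,(0,0))) ≥ A, and sup_{p ∈ 𝔻} ‖∇^j f(p)‖ ≤ M for every 0 ≤ j ≤ n+1. Then H¹({z ∈ ℝ² : |z| < A/(4M), f(z) = 0, ∇f(z) ≠ 0}) ≤ √2 · n · A / M. -/
open MeasureTheory Set
open scoped ENNReal

noncomputable section

local notation "E2" => EuclideanSpace ℝ (Fin 2)
local notation "B1" => Metric.ball (0 : EuclideanSpace ℝ (Fin 2)) 1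



/-- If `G k` is a chain of derivatives on a convex set `s` and `G j` has no zeros on `s`,
then `G 0` has at most `j` zeros in `s`. -/
lemma zeros_card_le : ∀ (j : ℕ) (G : ℕ → ℝ → ℝ) (s : Set ℝ), Convex ℝ s →
    (∀ k < j, ∀ y ∈ s, HasDerivAt (G k) (G (k+1) y) y) →
    (∀ y ∈ s, G j y ≠ 0) →
    ∀ t : Finset ℝ, (∀ y ∈ t, y ∈ s ∧ G 0 y = 0) → t.card ≤ j := by
  intro j
  induction j with
  | zero =>
    intro G s hconv hchain hne t ht
    by_contra h
    push_neg at h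
    obtain ⟨y, hy⟩ := Finset.card_pos.mp h
    exact hne y (ht y hy).1 (ht y hy).2
  | succ j ih =>
    intro G s hconv hchain hne t ht
    by_contra hcard
    push_neg at hcard
    set m := t.card with hm
    have hm2 : j + 2 ≤ m := hcard
    let o : Fin m ≃o {x // x ∈ t} := t.orderIsoOfFin rfl
    have hmem : ∀ i : Fin m, ((o i : ℝ) ∈ s ∧ G 0 (o i) = 0) := fun i => ht _ (o i).2
    -- Rolle between consecutive sorted zeros
    have H : ∀ i : Fin (m-1), ∃ c,
        c ∈ Ioo (o ⟨i, by omega⟩ : ℝ) (o ⟨(i:ℕ)+1, by omega⟩) ∧ G 1 c = 0 := by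
      intro i
      have hi : (i : ℕ) < m - 1 := i.2
      set x : ℝ := (o ⟨i, by omega⟩ : ℝ)
      set y : ℝ := (o ⟨(i:ℕ)+1, by omega⟩ : ℝ)
      have hxy : x < y := by
        have := o.strictMono (show (⟨i, by omega⟩ : Fin m) < ⟨(i:ℕ)+1, by omega⟩ from by
          simp [Fin.lt_def])
        exact_mod_cast this
      have hxs : x ∈ s := (hmem _).1
      have hys : y ∈ s := (hmem _).1
      have hIcc : Icc x y ⊆ s := hconv.ordConnected.out hxs hys
      have hder : ∀ z ∈ s, HasDerivAt (G 0) (G 1 z) z := fun z hz =>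
        hchain 0 (by omega) z hz
      obtain ⟨c, hc, hc0⟩ := exists_hasDerivAt_eq_zero hxy
        (fun z hz => ((hder z (hIcc hz)).continuousAt).continuousWithinAt)
        (by rw [(hmem _).2, (hmem _).2])
        (fun z hz => hder z (hIcc (Ioo_subset_Icc_self hz)))
      exact ⟨c, hc, hc0⟩
    choose d hd1 hd2 using H
    have hmono : StrictMono d := by
      intro i k h
      have hik : (i:ℕ) < (k:ℕ) := h
      have h1 : d i < (o ⟨(i:ℕ)+1, by omega⟩ : ℝ) := (hd1 i).2
      have h2 : (o ⟨(k:ℕ), by omega⟩ : ℝ) < d k := (hd1 k).1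
      have h3 : (o ⟨(i:ℕ)+1, by omega⟩ : ℝ) ≤ (o ⟨(k:ℕ), by omega⟩ : ℝ) := by
        have := o.monotone (show (⟨(i:ℕ)+1, by omega⟩ : Fin m) ≤ ⟨(k:ℕ), by omega⟩ from by
          simp [Fin.le_def]; omega)
        exact_mod_cast this
      linarith
    have hinj : Function.Injective d := hmono.injective
    let t' : Finset ℝ := Finset.image d Finset.univ
    have hcard' : t'.card = m - 1 := by
      rw [Finset.card_image_of_injective _ hinj, Finset.card_univ, Fintype.card_fin]
    have hle : t'.card ≤ j := by
      apply ih (fun k => G (k+1)) s hconv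
        (fun k hk y hy => hchain (k+1) (by omega) y hy)
        (fun y hy => hne y hy)
      intro y hy
      obtain ⟨i, _, rfl⟩ := Finset.mem_image.mp hy
      have h1 := hd1 i
      have hxs : ((o ⟨i, by omega⟩ : ℝ)) ∈ s := (hmem _).1
      have hys : ((o ⟨(i:ℕ)+1, by omega⟩ : ℝ)) ∈ s := (hmem _).1
      exact ⟨hconv.ordConnected.out hxs hys (Ioo_subset_Icc_self h1), hd2 i⟩
    omega

lemma iteratedDeriv_eq_of_chain (G : ℕ → ℝ → ℝ) (s : Set ℝ) (hs : IsOpen s)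
    (hchain : ∀ k, ∀ y ∈ s, HasDerivAt (G k) (G (k+1) y) y) :
    ∀ j, ∀ y ∈ s, iteratedDeriv j (G 0) y = G j y := by
  intro j
  induction j with
  | zero => intro y _; simp [iteratedDeriv_zero]
  | succ j ih =>
    intro y hy
    rw [iteratedDeriv_succ]
    have h1 : deriv (iteratedDeriv j (G 0)) y = deriv (G j) y := by
      apply Filter.EventuallyEq.deriv_eq
      filter_upwards [hs.mem_nhds hy] with z hz using ih z hz
    rw [h1, (hchain j y hy).deriv]

/-- directional iterated derivative -/
def Dv (f : EuclideanSpace ℝ (Fin 2) → ℝ) (k : ℕ) (v z : EuclideanSpace ℝ (Fin 2)) : ℝ :=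
  iteratedFDeriv ℝ k f z (fun _ => v)

lemma const_cons (k : ℕ) (v : EuclideanSpace ℝ (Fin 2)) :
    (Fin.cons v (fun _ : Fin k => v) : Fin (k+1) → EuclideanSpace ℝ (Fin 2)) = fun _ => v := by
  funext i
  refine Fin.cases ?_ ?_ i <;> simp

lemma taylor_eq (f : EuclideanSpace ℝ (Fin 2) → ℝ) (hf : ContDiffOn ℝ (⊤ : ℕ∞) f B1) (k : ℕ)
    {z : EuclideanSpace ℝ (Fin 2)} (hz : z ∈ B1) :
    ftaylorSeriesWithin ℝ f B1 z k = iteratedFDeriv ℝ k f z := by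
  have : ftaylorSeriesWithin ℝ f B1 z k = iteratedFDerivWithin ℝ k f B1 z := rfl
  rw [this, iteratedFDerivWithin_of_isOpen k Metric.isOpen_ball hz]

lemma hasTaylor (f : EuclideanSpace ℝ (Fin 2) → ℝ) (hf : ContDiffOn ℝ (⊤ : ℕ∞) f B1) :
    HasFTaylorSeriesUpToOn ⊤ f (ftaylorSeriesWithin ℝ f B1) B1 :=
  (hasFTaylorSeriesUpToOn_top_iff le_top).2
    ((hasFTaylorSeriesUpToOn_top_iff le_rfl).1 (hf.ftaylorSeriesWithin Metric.isOpen_ball.uniqueDiffOn))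

/-- derivative of the Taylor coefficient, as a `HasFDerivAt` -/
lemma taylor_fderiv (f : EuclideanSpace ℝ (Fin 2) → ℝ) (hf : ContDiffOn ℝ (⊤ : ℕ∞) f B1) (k : ℕ)
    {z : EuclideanSpace ℝ (Fin 2)} (hz : z ∈ B1) :
    HasFDerivAt (fun w => ftaylorSeriesWithin ℝ f B1 w k)
      ((ftaylorSeriesWithin ℝ f B1 z (k+1)).curryLeft) z := by
  have h := (hasTaylor f hf).fderivWithin k (by exact_mod_cast lt_top_iff_ne_top.2 (by simp)) z hz
  exact h.hasFDerivAt (Metric.isOpen_ball.mem_nhds hz)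

lemma lineDerivChain (f : EuclideanSpace ℝ (Fin 2) → ℝ) (hf : ContDiffOn ℝ (⊤ : ℕ∞) f B1)
    (c v : EuclideanSpace ℝ (Fin 2)) (k : ℕ) (y : ℝ) (hy : c + y • v ∈ B1) :
    HasDerivAt (fun t => Dv f k v (c + t • v)) (Dv f (k+1) v (c + y • v)) y := by
  set P := ftaylorSeriesWithin ℝ f B1 with hP
  have hline : HasDerivAt (fun t : ℝ => c + t • v) v y := by
    simpa using ((hasDerivAt_id y).smul_const v).const_add c
  have hcomp : HasDerivAt (fun t : ℝ => P (c + t • v) k) ((P (c + y • v) (k+1)).curryLeft v) y :=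
    (taylor_fderiv f hf k hy).comp_hasDerivAt y hline
  have hΦ := (ContinuousMultilinearMap.apply ℝ (fun _ : Fin k => EuclideanSpace ℝ (Fin 2)) ℝ
    (fun _ => v)).hasFDerivAt (x := (P (c + y • v) k))
  have hc2 : HasDerivAt (fun t : ℝ => P (c + t • v) k (fun _ => v))
      ((P (c + y • v) (k+1)).curryLeft v (fun _ => v)) y := by
    exact hΦ.comp_hasDerivAt y hcomp
  have heq : (fun t : ℝ => P (c + t • v) k (fun _ => v)) =ᶠ[nhds y]
      (fun t => Dv f k v (c + t • v)) := by
    have hcont : Continuous (fun t : ℝ => c + t • v) := by continuity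
    filter_upwards [hcont.isOpen_preimage _ Metric.isOpen_ball |>.mem_nhds hy] with t ht
    rw [hP]
    rw [taylor_eq f hf k ht]
    rfl
  have hval : (P (c + y • v) (k+1)).curryLeft v (fun _ => v) = Dv f (k+1) v (c + y • v) := by
    rw [ContinuousMultilinearMap.curryLeft_apply, hP, taylor_eq f hf (k+1) hy]
    rw [show (Fin.cons v (fun _ : Fin k => v) : Fin (k+1) → EuclideanSpace ℝ (Fin 2)) = fun _ => v
      from const_cons k v]
    rfl
  rw [← hval]
  exact hc2.congr_of_eventuallyEq heq.symm

lemma Dv_zero (f : EuclideanSpace ℝ (Fin 2) → ℝ) (v z : EuclideanSpace ℝ (Fin 2)) :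
    Dv f 0 v z = f z := by
  simp [Dv]

/-- value of the axis iterated derivatives at the origin -/
lemma iteratedDeriv_axis (f : EuclideanSpace ℝ (Fin 2) → ℝ) (hf : ContDiffOn ℝ (⊤ : ℕ∞) f B1)
    (v : EuclideanSpace ℝ (Fin 2)) (hv : ‖v‖ = 1) (j : ℕ) :
    iteratedDeriv j (fun t : ℝ => f (t • v)) 0 = Dv f j v 0 := by
  have hsub : ∀ y ∈ Ioo (-1 : ℝ) 1, (0 : EuclideanSpace ℝ (Fin 2)) + y • v ∈ B1 := by
    intro y hy
    rw [zero_add, mem_ball_zero_iff, norm_smul, hv, mul_one]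
    rw [Real.norm_eq_abs, abs_lt]
    exact ⟨hy.1, hy.2⟩
  have hchain : ∀ k, ∀ y ∈ Ioo (-1:ℝ) 1,
      HasDerivAt (fun t => Dv f k v ((0 : EuclideanSpace ℝ (Fin 2)) + t • v))
        (Dv f (k+1) v ((0 : EuclideanSpace ℝ (Fin 2)) + y • v)) y := fun k y hy =>
    lineDerivChain f hf 0 v k y (hsub y hy)
  have h := iteratedDeriv_eq_of_chain _ _ isOpen_Ioo hchain j 0 (by norm_num)
  have heq : (fun t : ℝ => f (t • v)) =
      (fun t => Dv f 0 v ((0 : EuclideanSpace ℝ (Fin 2)) + t • v)) := by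
    funext t; rw [Dv_zero, zero_add]
  rw [heq, h, zero_smul, add_zero]

/-- mean value bound for directional derivatives -/
lemma mvt_bound (f : EuclideanSpace ℝ (Fin 2) → ℝ) (hf : ContDiffOn ℝ (⊤ : ℕ∞) f B1)
    (v : EuclideanSpace ℝ (Fin 2)) (hv : ‖v‖ = 1) (j : ℕ) (M : ℝ)
    (hM : ∀ p ∈ B1, ‖iteratedFDeriv ℝ (j+1) f p‖ ≤ M)
    {z : EuclideanSpace ℝ (Fin 2)} (hz : z ∈ B1) :
    |Dv f j v z - Dv f j v 0| ≤ M * ‖z‖ := by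
  set P := ftaylorSeriesWithin ℝ f B1 with hP
  set Φ := ContinuousMultilinearMap.apply ℝ (fun _ : Fin j => EuclideanSpace ℝ (Fin 2)) ℝ
    (fun _ => v) with hΦ
  have h0 : (0 : EuclideanSpace ℝ (Fin 2)) ∈ B1 := by simp
  have hd : ∀ w ∈ B1, HasFDerivWithinAt (fun z => Dv f j v z)
      (Φ.comp (P w (j+1)).curryLeft) B1 w := by
    intro w hw
    have h1 : HasFDerivWithinAt (fun w => P w j) ((P w (j+1)).curryLeft) B1 w :=
      ((taylor_fderiv f hf j hw)).hasFDerivWithinAt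
    have h2 := (Φ.hasFDerivAt (x := P w j)).comp_hasFDerivWithinAt w h1
    apply h2.congr
    · intro u hu
      show Dv f j v u = Φ (P u j)
      rw [hP, taylor_eq f hf j hu]; rfl
    · show Dv f j v w = Φ (P w j)
      rw [hP, taylor_eq f hf j hw]; rfl
  have hbound : ∀ w ∈ B1, ‖Φ.comp (P w (j+1)).curryLeft‖ ≤ M := by
    intro w hw
    apply ContinuousLinearMap.opNorm_le_bound _ ((norm_nonneg _).trans (hM 0 h0))
    intro u
    show ‖(P w (j+1)).curryLeft u (fun _ => v)‖ ≤ M * ‖u‖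
    rw [ContinuousMultilinearMap.curryLeft_apply]
    calc ‖(P w (j+1)) (Fin.cons u (fun _ => v))‖
        ≤ ‖P w (j+1)‖ * ∏ i : Fin (j+1), ‖(Fin.cons u (fun _ : Fin j => v)
            : Fin (j+1) → EuclideanSpace ℝ (Fin 2)) i‖ :=
          ContinuousMultilinearMap.le_opNorm _ _
      _ = ‖P w (j+1)‖ * ‖u‖ := by
          rw [Fin.prod_univ_succ]
          simp [hv]
      _ ≤ M * ‖u‖ := by
          apply mul_le_mul_of_nonneg_right _ (norm_nonneg u)
          rw [hP, taylor_eq f hf (j+1) hw]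
          exact hM w hw
  have := (convex_ball (0 : EuclideanSpace ℝ (Fin 2)) 1).norm_image_sub_le_of_norm_hasFDerivWithin_le
    hd hbound h0 hz
  simpa using this

def ee (i : Fin 2) : EuclideanSpace ℝ (Fin 2) := EuclideanSpace.single i (1:ℝ)

lemma norm_ee (i : Fin 2) : ‖ee i‖ = 1 := by
  rw [ee, EuclideanSpace.norm_single, norm_one]

lemma decomp (a b : Fin 2) (hab : a ≠ b) (z : EuclideanSpace ℝ (Fin 2)) :
    z a • ee a + z b • ee b = z := by
  ext i
  simp only [ee, PiLp.add_apply, PiLp.smul_apply, EuclideanSpace.single_apply, smul_eq_mul]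
  fin_cases a <;> fin_cases b <;> simp_all <;> fin_cases i <;> simp

lemma sum_fin_two (a b : Fin 2) (hab : a ≠ b) (g : Fin 2 → ℝ) :
    ∑ i, g i = g a + g b := by
  fin_cases a <;> fin_cases b <;> simp_all [Fin.sum_univ_two, add_comm]

lemma abs_coord_le_norm (z : EuclideanSpace ℝ (Fin 2)) (i : Fin 2) : |z i| ≤ ‖z‖ := by
  have h := EuclideanSpace.norm_eq z
  have h2 : |z i| = Real.sqrt (‖z i‖^2) := by
    rw [Real.sqrt_sq_eq_abs]; simp
  rw [h2, h]
  apply Real.sqrt_le_sqrt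
  exact Finset.single_le_sum (f := fun j => ‖z j‖^2) (fun j _ => sq_nonneg _) (Finset.mem_univ i)

lemma curry1_apply (f : EuclideanSpace ℝ (Fin 2) → ℝ) (hf : ContDiffOn ℝ (⊤ : ℕ∞) f B1)
    {z : EuclideanSpace ℝ (Fin 2)} (hz : z ∈ B1) (w : EuclideanSpace ℝ (Fin 2)) :
    (continuousMultilinearCurryFin1 ℝ (EuclideanSpace ℝ (Fin 2)) ℝ)
      (ftaylorSeriesWithin ℝ f B1 z 1) w = Dv f 1 w z := by
  rw [continuousMultilinearCurryFin1_apply, taylor_eq f hf 1 hz]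
  have hsnoc : (Fin.snoc (0 : Fin 0 → EuclideanSpace ℝ (Fin 2)) w : Fin 1 → EuclideanSpace ℝ (Fin 2))
      = fun _ => w := by
    funext i
    have h0 : i = 0 := by omega
    subst h0
    simp [Fin.snoc]
  show iteratedFDeriv ℝ 1 f z (Fin.snoc 0 w) = iteratedFDeriv ℝ 1 f z (fun _ => w)
  rw [hsnoc]

lemma hasfderiv_f (f : EuclideanSpace ℝ (Fin 2) → ℝ) (hf : ContDiffOn ℝ (⊤ : ℕ∞) f B1)
    {z : EuclideanSpace ℝ (Fin 2)} (hz : z ∈ B1) :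
    HasFDerivAt f ((continuousMultilinearCurryFin1 ℝ (EuclideanSpace ℝ (Fin 2)) ℝ)
      (ftaylorSeriesWithin ℝ f B1 z 1)) z :=
  ((hasTaylor f hf).hasFDerivWithinAt (by simp) hz).hasFDerivAt (Metric.isOpen_ball.mem_nhds hz)

lemma fderiv_apply_eq (f : EuclideanSpace ℝ (Fin 2) → ℝ) (hf : ContDiffOn ℝ (⊤ : ℕ∞) f B1)
    {z : EuclideanSpace ℝ (Fin 2)} (hz : z ∈ B1) (w : EuclideanSpace ℝ (Fin 2)) :
    fderiv ℝ f z w = Dv f 1 w z := by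
  rw [(hasfderiv_f f hf hz).fderiv, curry1_apply f hf hz]

lemma Dv1_expand (f : EuclideanSpace ℝ (Fin 2) → ℝ) (hf : ContDiffOn ℝ (⊤ : ℕ∞) f B1)
    (a b : Fin 2) (hab : a ≠ b)
    {z : EuclideanSpace ℝ (Fin 2)} (hz : z ∈ B1) (w : EuclideanSpace ℝ (Fin 2)) :
    Dv f 1 w z = w a * Dv f 1 (ee a) z + w b * Dv f 1 (ee b) z := by
  have h1 : ∀ u, Dv f 1 u z = fderiv ℝ f z u := fun u => (fderiv_apply_eq f hf hz u).symm
  rw [h1, h1, h1]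
  conv_lhs => rw [← decomp a b hab w]
  rw [map_add, (fderiv ℝ f z).map_smul, (fderiv ℝ f z).map_smul]
  simp [smul_eq_mul]

lemma contOn_Dv (f : EuclideanSpace ℝ (Fin 2) → ℝ) (hf : ContDiffOn ℝ (⊤ : ℕ∞) f B1)
    (k : ℕ) (v : EuclideanSpace ℝ (Fin 2)) :
    ContinuousOn (fun z => Dv f k v z) B1 := by
  have h1 : ContinuousOn (fun z => ftaylorSeriesWithin ℝ f B1 z k) B1 :=
    (hasTaylor f hf).cont k le_top
  have h2 := ((ContinuousMultilinearMap.apply ℝ (fun _ : Fin k => EuclideanSpace ℝ (Fin 2)) ℝ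
    (fun _ => v)).continuous).comp_continuousOn h1
  apply h2.congr
  intro z hz
  show Dv f k v z = _
  rw [Function.comp_apply]
  show Dv f k v z = (ftaylorSeriesWithin ℝ f B1 z k) (fun _ => v)
  rw [taylor_eq f hf k hz]; rfl

lemma local_lip (f : EuclideanSpace ℝ (Fin 2) → ℝ) (hf : ContDiffOn ℝ (⊤ : ℕ∞) f B1)
    (a b : Fin 2) (hab : a ≠ b) (r : ℝ) (hr1 : r < 1) (ε : ℝ) (hε : 0 < ε)
    (p : EuclideanSpace ℝ (Fin 2)) (hp : p ∈ Metric.ball (0:EuclideanSpace ℝ (Fin 2)) r)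
    (hfd : fderiv ℝ f p ≠ 0)
    (hpab : |Dv f 1 (ee a) p| ≤ |Dv f 1 (ee b) p|) :
    ∃ δ > 0, Metric.ball p δ ⊆ Metric.ball (0:EuclideanSpace ℝ (Fin 2)) r ∧
      ∀ z ∈ Metric.ball p δ, ∀ z' ∈ Metric.ball p δ, f z = 0 → f z' = 0 →
        |z b - z' b| ≤ (1+ε) * |z a - z' a| := by
  have hBr1 : Metric.ball (0:EuclideanSpace ℝ (Fin 2)) r ⊆ B1 :=
    Metric.ball_subset_ball (by linarith)
  have hpB : p ∈ B1 := hBr1 hp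
  set β := |Dv f 1 (ee b) p| with hβdef
  have hβ : 0 < β := by
    rcases lt_or_ge 0 β with h | h
    · exact h
    · exfalso
      have hβ0 : β = 0 := le_antisymm h (abs_nonneg _)
      have hα0 : |Dv f 1 (ee a) p| = 0 := le_antisymm (hβ0 ▸ hpab) (abs_nonneg _)
      apply hfd
      apply ContinuousLinearMap.ext
      intro w
      rw [fderiv_apply_eq f hf hpB w, Dv1_expand f hf a b hab hpB w]
      rw [abs_eq_zero] at hα0
      have hb0 : |Dv f 1 (ee b) p| = 0 := hβ0
      rw [abs_eq_zero] at hb0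
      simp [hα0, hb0]
  set η := ε * β / (2+ε) with hηdef
  have hη : 0 < η := by positivity
  have hmul : (2+ε) * η = ε * β := by rw [hηdef]; field_simp
  have hηβ : η < β := by nlinarith
  have hkey : β + η ≤ (1+ε)*(β - η) := by nlinarith
  have hca := (contOn_Dv f hf 1 (ee a)).continuousAt (Metric.isOpen_ball.mem_nhds hpB)
  have hcb := (contOn_Dv f hf 1 (ee b)).continuousAt (Metric.isOpen_ball.mem_nhds hpB)
  obtain ⟨δ1, hδ1, hd1⟩ := Metric.continuousAt_iff.mp hca η hη
  obtain ⟨δ2, hδ2, hd2⟩ := Metric.continuousAt_iff.mp hcb η hη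
  obtain ⟨δ3, hδ3, hd3⟩ := Metric.isOpen_iff.mp Metric.isOpen_ball p hp
  set δ := min δ1 (min δ2 δ3) with hδdef
  have hδpos : 0 < δ := by positivity
  have hδsub3 : Metric.ball p δ ⊆ Metric.ball p δ3 :=
    Metric.ball_subset_ball (le_trans (min_le_right _ _) (min_le_right _ _))
  have hδsubr : Metric.ball p δ ⊆ Metric.ball (0:EuclideanSpace ℝ (Fin 2)) r :=
    fun z hz => hd3 (hδsub3 hz)
  refine ⟨δ, hδpos, hδsubr, ?_⟩
  intro z hz z' hz' hfz hfz'
  have hball : ∀ ξ ∈ Metric.ball p δ,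
      |Dv f 1 (ee a) ξ| ≤ β + η ∧ β - η ≤ |Dv f 1 (ee b) ξ| := by
    intro ξ hξ
    have h1 : dist ξ p < δ1 := lt_of_lt_of_le hξ (min_le_left _ _)
    have h2 : dist ξ p < δ2 := lt_of_lt_of_le hξ (le_trans (min_le_right _ _) (min_le_left _ _))
    have e1 := hd1 h1
    have e2 := hd2 h2
    rw [Real.dist_eq] at e1 e2
    constructor
    · have t1 : |Dv f 1 (ee a) ξ| - |Dv f 1 (ee a) p| ≤ |Dv f 1 (ee a) ξ - Dv f 1 (ee a) p| :=
        abs_sub_abs_le_abs_sub _ _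
      linarith
    · have t2 : |Dv f 1 (ee b) p| - |Dv f 1 (ee b) ξ| ≤ |Dv f 1 (ee b) p - Dv f 1 (ee b) ξ| :=
        abs_sub_abs_le_abs_sub _ _
      rw [abs_sub_comm] at t2
      linarith
  have hsegm : ∀ t ∈ Icc (0:ℝ) 1, z + t • (z' - z) ∈ Metric.ball p δ := by
    intro t ht
    have h1 : (1 - t) • z + t • z' ∈ Metric.ball p δ :=
      convex_ball p δ hz hz' (by linarith [ht.2]) ht.1 (by ring)
    have h2 : (1 - t) • z + t • z' = z + t • (z' - z) := by module
    rwa [h2] at h1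
  have hder : ∀ t ∈ Icc (0:ℝ) 1,
      HasDerivAt (fun s : ℝ => f (z + s • (z' - z))) (Dv f 1 (z' - z) (z + t • (z' - z))) t := by
    intro t ht
    have hξB : z + t • (z' - z) ∈ B1 := hBr1 (hδsubr (hsegm t ht))
    have hline : HasDerivAt (fun s : ℝ => z + s • (z' - z)) (z' - z) t := by
      simpa using ((hasDerivAt_id t).smul_const (z' - z)).const_add z
    have hcomp := (hasfderiv_f f hf hξB).comp_hasDerivAt t hline
    rwa [curry1_apply f hf hξB] at hcomp
  obtain ⟨ξt, hξt, hξ0⟩ := exists_hasDerivAt_eq_zero (f := fun s : ℝ => f (z + s • (z' - z)))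
    (f' := fun s => Dv f 1 (z' - z) (z + s • (z' - z))) one_pos
    (fun t ht => ((hder t ht).continuousAt).continuousWithinAt)
    (by simp [hfz, hfz'])
    (fun t ht => hder t (Ioo_subset_Icc_self ht))
  set ξ := z + ξt • (z' - z) with hξdef
  have hξball : ξ ∈ Metric.ball p δ := hsegm ξt (Ioo_subset_Icc_self hξt)
  have hξB1 : ξ ∈ B1 := hBr1 (hδsubr hξball)
  have hexp := Dv1_expand f hf a b hab hξB1 (z' - z)
  rw [hξ0] at hexp
  have hsa : (z' - z) a = z' a - z a := rfl
  have hsb : (z' - z) b = z' b - z b := rfl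
  rw [hsa, hsb] at hexp
  have habs : |(z' b - z b) * Dv f 1 (ee b) ξ| = |(z' a - z a) * Dv f 1 (ee a) ξ| := by
    have h4 : (z' b - z b) * Dv f 1 (ee b) ξ = -((z' a - z a) * Dv f 1 (ee a) ξ) := by linarith
    rw [h4, abs_neg]
  obtain ⟨hba, hbb⟩ := hball ξ hξball
  have hX : 0 < |Dv f 1 (ee b) ξ| := lt_of_lt_of_le (by linarith) hbb
  have hchain2 : |z b - z' b| * |Dv f 1 (ee b) ξ| ≤ ((1+ε) * |z a - z' a|) * |Dv f 1 (ee b) ξ| := by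
    calc |z b - z' b| * |Dv f 1 (ee b) ξ|
        = |(z' b - z b) * Dv f 1 (ee b) ξ| := by rw [abs_mul, abs_sub_comm]
      _ = |(z' a - z a) * Dv f 1 (ee a) ξ| := habs
      _ = |z' a - z a| * |Dv f 1 (ee a) ξ| := abs_mul _ _
      _ ≤ |z' a - z a| * (β + η) := mul_le_mul_of_nonneg_left hba (abs_nonneg _)
      _ ≤ |z' a - z a| * ((1+ε) * (β - η)) := mul_le_mul_of_nonneg_left hkey (abs_nonneg _)
      _ ≤ |z' a - z a| * ((1+ε) * |Dv f 1 (ee b) ξ|) := by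
          apply mul_le_mul_of_nonneg_left _ (abs_nonneg _)
          exact mul_le_mul_of_nonneg_left hbb (by linarith)
      _ = ((1+ε) * |z a - z' a|) * |Dv f 1 (ee b) ξ| := by rw [abs_sub_comm]; ring
  exact le_of_mul_le_mul_right hchain2 hX

open scoped ENNReal

set_option maxHeartbeats 2000000 in
lemma half (n : ℕ) (f : EuclideanSpace ℝ (Fin 2) → ℝ) (A M : ℝ) (hA : 0 < A) (hAM : A < M)
    (hf : ContDiffOn ℝ (⊤ : ℕ∞) f B1)
    (hM : ∀ j ≤ n+1, ∀ p ∈ B1, ‖iteratedFDeriv ℝ j f p‖ ≤ M)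
    (a b : Fin 2) (hab : a ≠ b)
    (jb : ℕ) (hjb : jb ≤ n) (hAb : A ≤ |Dv f jb (ee b) 0|)
    (ε : ℝ) (hε : 0 < ε) :
    μH[1] {z : EuclideanSpace ℝ (Fin 2) | ‖z‖ < A/(4*M) ∧ f z = 0 ∧ fderiv ℝ f z ≠ 0 ∧
        |Dv f 1 (ee a) z| ≤ |Dv f 1 (ee b) z|}
      ≤ ENNReal.ofReal ((1+ε) * Real.sqrt 2) * ((n : ℝ≥0∞) * ENNReal.ofReal (2 * (A/(4*M)))) := by
  classical
  have hM0 : 0 < M := hA.trans hAM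
  set r := A/(4*M) with hrdef
  have hr : 0 < r := by positivity
  have hr1 : r < 1 := by
    rw [hrdef, div_lt_one (by linarith)]
    nlinarith
  have hBr1 : Metric.ball (0:EuclideanSpace ℝ (Fin 2)) r ⊆ B1 :=
    Metric.ball_subset_ball (by linarith)
  set T := {z : EuclideanSpace ℝ (Fin 2) | ‖z‖ < r ∧ f z = 0 ∧ fderiv ℝ f z ≠ 0 ∧
      |Dv f 1 (ee a) z| ≤ |Dv f 1 (ee b) z|} with hTdef
  have hTr : T ⊆ Metric.ball (0:EuclideanSpace ℝ (Fin 2)) r := fun z hz =>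
    mem_ball_zero_iff.mpr hz.1
  -- non-vanishing of the directional derivative of order jb on the small ball
  have hnv : ∀ z ∈ Metric.ball (0:EuclideanSpace ℝ (Fin 2)) r, Dv f jb (ee b) z ≠ 0 := by
    intro z hz h0
    have h1 := mvt_bound f hf (ee b) (norm_ee b) jb M
      (fun p hp => hM (jb+1) (by omega) p hp) (hBr1 hz)
    have h2 : ‖z‖ < r := mem_ball_zero_iff.mp hz
    rw [h0, zero_sub, abs_neg] at h1
    have h3 : M * ‖z‖ < M * r := by
      apply mul_lt_mul_of_pos_left h2 hM0
    have h4 : M * r = A / 4 := by rw [hrdef]; field_simp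
    linarith
  -- at most `n` zeros on each line in direction `b`
  have hcount : ∀ x : ℝ, ∀ t : Finset ℝ,
      (∀ y ∈ t, (x • ee a + y • ee b) ∈ Metric.ball (0:EuclideanSpace ℝ (Fin 2)) r ∧
        f (x • ee a + y • ee b) = 0) → t.card ≤ n := by
    intro x t ht
    refine le_trans (zeros_card_le jb (fun k y => Dv f k (ee b) (x • ee a + y • ee b))
      {y : ℝ | (x • ee a + y • ee b) ∈ Metric.ball (0:EuclideanSpace ℝ (Fin 2)) r}
      ?_ ?_ ?_ t ?_) hjb
    · intro y1 hy1 y2 hy2 α β hα hβ hαβ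
      have key : α • (x • ee a + y1 • ee b) + β • (x • ee a + y2 • ee b)
          = (α + β) • (x • ee a) + (α * y1 + β * y2) • ee b := by module
      rw [hαβ, one_smul] at key
      have hm := convex_ball (0:EuclideanSpace ℝ (Fin 2)) r hy1 hy2 hα hβ hαβ
      rw [key] at hm
      exact hm
    · intro k _ y hy
      exact lineDerivChain f hf (x • ee a) (ee b) k y (hBr1 hy)
    · intro y hy
      exact hnv _ hy
    · intro y hy
      refine ⟨(ht y hy).1, ?_⟩
      show Dv f 0 (ee b) _ = 0
      rw [Dv_zero]
      exact (ht y hy).2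
  -- measurability of T
  have hTmeas : MeasurableSet T := by
    have hfc : ContinuousOn f B1 := hf.continuousOn
    obtain ⟨C1, hC1c, hC1⟩ := continuousOn_iff_isClosed.mp hfc {0} isClosed_singleton
    have hfdc : ContinuousOn (fun z => fderiv ℝ f z) B1 := by
      have h1 : ContinuousOn (fun z => (continuousMultilinearCurryFin1 ℝ
          (EuclideanSpace ℝ (Fin 2)) ℝ) (ftaylorSeriesWithin ℝ f B1 z 1)) B1 :=
        (continuousMultilinearCurryFin1 ℝ (EuclideanSpace ℝ (Fin 2))
          ℝ).continuous.comp_continuousOn ((hasTaylor f hf).cont 1 le_top)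
      exact h1.congr (fun z hz => ((hasfderiv_f f hf hz).fderiv))
    obtain ⟨U2, hU2o, hU2⟩ := continuousOn_iff'.mp hfdc {0}ᶜ isOpen_compl_singleton
    have hgc : ContinuousOn (fun z => |Dv f 1 (ee b) z| - |Dv f 1 (ee a) z|) B1 :=
      ((contOn_Dv f hf 1 (ee b)).abs.sub (contOn_Dv f hf 1 (ee a)).abs)
    obtain ⟨C3, hC3c, hC3⟩ := continuousOn_iff_isClosed.mp hgc (Ici 0) isClosed_Ici
    have hTeq : T = Metric.ball (0:EuclideanSpace ℝ (Fin 2)) r ∩ (C1 ∩ (U2 ∩ C3)) := by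
      ext z
      simp only [hTdef, mem_setOf_eq, mem_inter_iff, mem_ball_zero_iff]
      constructor
      · rintro ⟨h1, h2, h3, h4⟩
        have hzB : z ∈ B1 := hBr1 (mem_ball_zero_iff.mpr h1)
        refine ⟨h1, ?_, ?_, ?_⟩
        · have hmem : z ∈ f ⁻¹' {0} ∩ B1 := ⟨by simpa using h2, hzB⟩
          rw [hC1] at hmem; exact hmem.1
        · have hmem : z ∈ (fun z => fderiv ℝ f z) ⁻¹' {0}ᶜ ∩ B1 := ⟨by simpa using h3, hzB⟩
          rw [hU2] at hmem; exact hmem.1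
        · have hmem : z ∈ (fun z => |Dv f 1 (ee b) z| - |Dv f 1 (ee a) z|) ⁻¹' (Ici 0) ∩ B1 :=
            ⟨by simp only [mem_preimage, mem_Ici]; linarith, hzB⟩
          rw [hC3] at hmem; exact hmem.1
      · rintro ⟨h1, h2, h3, h4⟩
        have hzB : z ∈ B1 := hBr1 (mem_ball_zero_iff.mpr h1)
        refine ⟨h1, ?_, ?_, ?_⟩
        · have hmem : z ∈ C1 ∩ B1 := ⟨h2, hzB⟩
          rw [← hC1] at hmem
          simpa using hmem.1
        · have hmem : z ∈ U2 ∩ B1 := ⟨h3, hzB⟩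
          rw [← hU2] at hmem
          simpa using hmem.1
        · have hmem : z ∈ C3 ∩ B1 := ⟨h4, hzB⟩
          rw [← hC3] at hmem
          have h5 := hmem.1
          simp only [mem_preimage, mem_Ici] at h5
          linarith
    rw [hTeq]
    exact measurableSet_ball.inter (hC1c.measurableSet.inter
      (hU2o.measurableSet.inter hC3c.measurableSet))
  -- local Lipschitz data
  have hloc : ∀ p ∈ T, ∃ δ > 0, Metric.ball p δ ⊆ Metric.ball (0:EuclideanSpace ℝ (Fin 2)) r ∧
      ∀ z ∈ Metric.ball p δ, ∀ z' ∈ Metric.ball p δ, f z = 0 → f z' = 0 →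
        |z b - z' b| ≤ (1+ε) * |z a - z' a| := fun p hp =>
    local_lip f hf a b hab r hr1 ε hε p (hTr hp) hp.2.2.1 hp.2.2.2
  choose! δf hδpos hδsub hδlip using hloc
  obtain ⟨u, huT, hucnt, hucov⟩ := TopologicalSpace.countable_cover_nhdsWithin
    (f := fun p => Metric.ball p (δf p)) (s := T)
    (fun p hp => mem_nhdsWithin_of_mem_nhds (Metric.ball_mem_nhds p (hδpos p hp)))
  rcases u.eq_empty_or_nonempty with hu | hu
  · subst hu
    have hTempty : T = ∅ := by
      apply eq_empty_of_subset_empty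
      simpa using hucov
    rw [hTempty, measure_empty]
    exact zero_le
  obtain ⟨g, hg⟩ := hucnt.exists_eq_range hu
  have hgT : ∀ i : ℕ, g i ∈ T := fun i => huT (by rw [hg]; exact mem_range_self i)
  set V : ℕ → Set (EuclideanSpace ℝ (Fin 2)) := fun i => Metric.ball (g i) (δf (g i)) with hVdef
  set F : ℕ → Set (EuclideanSpace ℝ (Fin 2)) :=
    fun i => (T ∩ V i) \ ⋃ (k : ℕ) (_ : k < i), V k with hFdef
  have hFT : ∀ i, F i ⊆ T := fun i z hz => hz.1.1
  have hTF : T ⊆ ⋃ i, F i := by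
    intro z hz
    have hex : ∃ i, z ∈ V i := by
      have h1 := hucov hz
      simp only [mem_iUnion] at h1
      obtain ⟨p, hpu, hzp⟩ := h1
      rw [hg] at hpu
      obtain ⟨i, rfl⟩ := hpu
      exact ⟨i, hzp⟩
    refine mem_iUnion.mpr ⟨Nat.find hex, ⟨⟨hz, Nat.find_spec hex⟩, ?_⟩⟩
    simp only [mem_iUnion, not_exists]
    intro k hk
    exact Nat.find_min hex hk
  have hFdisj : ∀ i k, i ≠ k → ∀ z, z ∈ F i → z ∈ F k → False := by
    intro i k hik z hzi hzk
    rcases lt_or_gt_of_ne hik with h | h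
    · apply hzk.2; simp only [mem_iUnion]; exact ⟨i, h, hzi.1.2⟩
    · apply hzi.2; simp only [mem_iUnion]; exact ⟨k, h, hzk.1.2⟩
  have hFmeas : ∀ i, MeasurableSet (F i) := by
    intro i
    apply (hTmeas.inter measurableSet_ball).diff
    exact MeasurableSet.iUnion (fun k => MeasurableSet.iUnion (fun _ => measurableSet_ball))
  have hπinj : ∀ i, InjOn (fun z : EuclideanSpace ℝ (Fin 2) => z a) (F i) := by
    intro i z hz z' hz' hzz
    have h1 := hδlip (g i) (hgT i) z hz.1.2 z' hz'.1.2 (hFT i hz).2.1 (hFT i hz').2.1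
    simp only at hzz
    rw [hzz] at h1
    simp only [sub_self, abs_zero, mul_zero] at h1
    have hzb : z b = z' b := by
      have := abs_nonneg (z b - z' b)
      have h2 : |z b - z' b| = 0 := le_antisymm h1 this
      rw [abs_eq_zero, sub_eq_zero] at h2
      exact h2
    have h3 : z a • ee a + z b • ee b = z' a • ee a + z' b • ee b := by rw [hzz, hzb]
    rw [decomp a b hab z, decomp a b hab z'] at h3
    exact h3
  set π : EuclideanSpace ℝ (Fin 2) → ℝ := fun z => z a with hπdef
  have hπcont : Continuous π := by
    exact (EuclideanSpace.proj (𝕜 := ℝ) (a : Fin 2)).continuous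
  set Bs : ℕ → Set ℝ := fun i => π '' F i with hBdef
  have hBmeas : ∀ i, MeasurableSet (Bs i) := fun i =>
    (hFmeas i).image_of_continuousOn_injOn hπcont.continuousOn (hπinj i)
  have hmain : ∀ i, μH[1] (F i) ≤ ENNReal.ofReal ((1+ε) * Real.sqrt 2) * volume (Bs i) := by
    intro i
    set ψ := Function.invFunOn π (F i) with hψdef
    have hψmem : ∀ x ∈ Bs i, ψ x ∈ F i ∧ π (ψ x) = x := by
      intro x hx
      obtain ⟨z, hz, hzx⟩ := hx
      exact ⟨Function.invFunOn_mem ⟨z, hz, hzx⟩, Function.invFunOn_eq ⟨z, hz, hzx⟩⟩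
    have hψim : ψ '' (Bs i) = F i := (hπinj i).invFunOn_image (subset_refl _)
    have hψlip : LipschitzOnWith (Real.toNNReal ((1+ε) * Real.sqrt 2)) ψ (Bs i) := by
      rw [lipschitzOnWith_iff_dist_le_mul]
      intro x hx y hy
      obtain ⟨hxF, hxπ⟩ := hψmem x hx
      obtain ⟨hyF, hyπ⟩ := hψmem y hy
      set da := dist (ψ x a) (ψ y a) with hdadef
      set db := dist (ψ x b) (ψ y b) with hdbdef
      have hda0 : 0 ≤ da := dist_nonneg
      have hdb0 : 0 ≤ db := dist_nonneg
      have hlipzz := hδlip (g i) (hgT i) (ψ x) hxF.1.2 (ψ y) hyF.1.2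
        (hFT i hxF).2.1 (hFT i hyF).2.1
      have hdb2 : db ≤ (1+ε) * da := by
        rw [hdadef, hdbdef, Real.dist_eq, Real.dist_eq]
        exact hlipzz
      have hxy : dist x y = da := by
        rw [← hxπ, ← hyπ]
      have h1 : dist (ψ x) (ψ y) = Real.sqrt (da^2 + db^2) := by
        rw [EuclideanSpace.dist_eq]
        congr 1
        exact sum_fin_two a b hab _
      have h2 : Real.sqrt (da^2 + db^2) ≤ (1+ε) * Real.sqrt 2 * da := by
        have h3 : da^2 + db^2 ≤ 2 * ((1+ε)*da)^2 := by
          have h4 : db*db ≤ ((1+ε)*da)*((1+ε)*da) := mul_le_mul hdb2 hdb2 hdb0 (by positivity)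
          nlinarith [h4, mul_nonneg hε.le (sq_nonneg da), sq_nonneg da]
        calc Real.sqrt (da^2+db^2) ≤ Real.sqrt (2 * ((1+ε)*da)^2) := Real.sqrt_le_sqrt h3
          _ = Real.sqrt 2 * ((1+ε)*da) := by
              rw [Real.sqrt_mul (by norm_num), Real.sqrt_sq (by positivity)]
          _ = (1+ε) * Real.sqrt 2 * da := by ring
      rw [hxy, h1]
      calc Real.sqrt (da^2 + db^2) ≤ (1+ε) * Real.sqrt 2 * da := h2
        _ = (Real.toNNReal ((1+ε) * Real.sqrt 2) : ℝ) * da := by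
            rw [Real.coe_toNNReal _ (by positivity)]
    calc μH[1] (F i) = μH[1] (ψ '' (Bs i)) := by rw [hψim]
      _ ≤ (Real.toNNReal ((1+ε) * Real.sqrt 2) : ℝ≥0∞)^(1:ℝ) * μH[1] (Bs i) :=
          hψlip.hausdorffMeasure_image_le zero_le_one
      _ = ENNReal.ofReal ((1+ε) * Real.sqrt 2) * volume (Bs i) := by
          rw [ENNReal.rpow_one, ← MeasureTheory.hausdorffMeasure_real]
          rfl
  have hpoint : ∀ x : ℝ, ∑' i, (Bs i).indicator (fun _ => (1:ℝ≥0∞)) x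
      ≤ (Ioo (-r) r).indicator (fun _ => (n:ℝ≥0∞)) x := by
    intro x
    by_cases hx : x ∈ Ioo (-r) r
    · rw [indicator_of_mem hx]
      rw [ENNReal.tsum_eq_iSup_sum]
      apply iSup_le
      intro s
      classical
      have hsum2 : ∑ i ∈ s, (Bs i).indicator (fun _ => (1:ℝ≥0∞)) x
          = ((s.filter (fun i => x ∈ Bs i)).card : ℝ≥0∞) := by
        simp only [indicator_apply]
        rw [Finset.sum_boole]
      have hwit : ∀ i, x ∈ Bs i → ∃ z, z ∈ F i ∧ z a = x := fun i hi => hi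
      set w : ℕ → EuclideanSpace ℝ (Fin 2) :=
        fun i => if h : x ∈ Bs i then (hwit i h).choose else 0 with hwdef
      have hw : ∀ i, x ∈ Bs i → w i ∈ F i ∧ w i a = x := by
        intro i hi
        rw [hwdef]
        simp only [dif_pos hi]
        exact (hwit i hi).choose_spec
      set tb := (s.filter (fun i => x ∈ Bs i)).image (fun i => w i b) with htbdef
      have hinj2 : InjOn (fun i => w i b) ↑(s.filter (fun i => x ∈ Bs i)) := by
        intro i hi k hk hik
        simp only [Finset.coe_filter, mem_setOf_eq] at hi hk
        obtain ⟨hwi, hwia⟩ := hw i hi.2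
        obtain ⟨hwk, hwka⟩ := hw k hk.2
        have heq : w i = w k := by
          have h1 : w i a • ee a + w i b • ee b = w k a • ee a + w k b • ee b := by
            rw [hwia, hwka]
            simp only at hik
            rw [hik]
          rw [decomp a b hab (w i), decomp a b hab (w k)] at h1
          exact h1
        by_contra hne
        exact hFdisj i k hne (w i) hwi (heq ▸ hwk)
      have hcard2 : (s.filter (fun i => x ∈ Bs i)).card = tb.card :=
        (Finset.card_image_of_injOn hinj2).symm
      have htb : tb.card ≤ n := by
        apply hcount x tb
        intro y hy
        obtain ⟨i, hi, rfl⟩ := Finset.mem_image.mp hy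
        simp only [Finset.mem_filter] at hi
        obtain ⟨hwi, hwia⟩ := hw i hi.2
        have hz : x • ee a + w i b • ee b = w i := by
          rw [← hwia]
          exact decomp a b hab (w i)
        rw [hz]
        exact ⟨hTr (hFT i hwi), (hFT i hwi).2.1⟩
      rw [hsum2]
      have : (s.filter (fun i => x ∈ Bs i)).card ≤ n := hcard2 ▸ htb
      exact_mod_cast this
    · have h0 : ∀ i, (Bs i).indicator (fun _ => (1:ℝ≥0∞)) x = 0 := by
        intro i
        rw [indicator_of_notMem]
        intro hxB
        obtain ⟨z, hz, hza⟩ := hxB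
        have h1 : ‖z‖ < r := (hFT i hz).1
        have h2 := abs_coord_le_norm z a
        have hza' : z a = x := hza
        rw [hza'] at h2
        apply hx
        have h3 := abs_lt.mp (lt_of_le_of_lt h2 h1)
        exact ⟨h3.1, h3.2⟩
      rw [tsum_congr h0]
      simp
  have hsum : ∑' i, volume (Bs i) ≤ (n : ℝ≥0∞) * ENNReal.ofReal (2*r) := by
    calc ∑' i, volume (Bs i)
        = ∑' i, ∫⁻ x, (Bs i).indicator (fun _ => (1:ℝ≥0∞)) x := by
          congr 1
          funext i
          exact (lintegral_indicator_one (hBmeas i)).symm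
      _ = ∫⁻ x, ∑' i, (Bs i).indicator (fun _ => (1:ℝ≥0∞)) x :=
          (lintegral_tsum (fun i => (measurable_const.indicator (hBmeas i)).aemeasurable)).symm
      _ ≤ ∫⁻ x, (Ioo (-r) r).indicator (fun _ => (n:ℝ≥0∞)) x := lintegral_mono hpoint
      _ = (n:ℝ≥0∞) * volume (Ioo (-r) r) := by
          rw [lintegral_indicator measurableSet_Ioo]
          simp [mul_comm]
      _ = (n:ℝ≥0∞) * ENNReal.ofReal (2*r) := by
          rw [Real.volume_Ioo]
          congr 1
          ring_nf
  calc μH[1] T ≤ μH[1] (⋃ i, F i) := measure_mono hTF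
    _ ≤ ∑' i, μH[1] (F i) := measure_iUnion_le _
    _ ≤ ∑' i, ENNReal.ofReal ((1+ε) * Real.sqrt 2) * volume (Bs i) := ENNReal.tsum_le_tsum hmain
    _ = ENNReal.ofReal ((1+ε) * Real.sqrt 2) * ∑' i, volume (Bs i) := ENNReal.tsum_mul_left
    _ ≤ _ := mul_le_mul_right hsum _

set_option maxHeartbeats 1000000 in
/-- Lemma on nodal length in the unit disc: let `f` be smooth on the
open unit disc `𝔻 ⊆ ℝ²`. If `min(d₁(f,0), d₂(f,0)) ≥ A`, where
`d_ℓ(f,p) = max_{0 ≤ j ≤ n} |∂_ℓ^j f(p)|`, and all iterated derivatives of order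
`≤ n+1` are bounded by `M` on `𝔻` (with `M > A > 0`), then the `H¹`-measure of the
non-singular zero set of `f` in the disc of radius `A/(4M)` is at most `√2 n A / M`. -/
theorem stmt2 (n : ℕ) (f : EuclideanSpace ℝ (Fin 2) → ℝ) (A M : ℝ)
    (hA : 0 < A) (hAM : A < M)
    (hf : ContDiffOn ℝ (⊤ : ℕ∞) f (Metric.ball (0 : EuclideanSpace ℝ (Fin 2)) 1))
    (hd : ∀ ℓ : Fin 2, ∃ j ≤ n,
      A ≤ |iteratedDeriv j (fun t : ℝ => f (t • EuclideanSpace.single ℓ (1 : ℝ))) 0|)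
    (hM : ∀ j ≤ n + 1, ∀ p ∈ Metric.ball (0 : EuclideanSpace ℝ (Fin 2)) 1,
      ‖iteratedFDeriv ℝ j f p‖ ≤ M) :
    μH[1] {z : EuclideanSpace ℝ (Fin 2) |
        ‖z‖ < A / (4 * M) ∧ f z = 0 ∧ fderiv ℝ f z ≠ 0}
      ≤ ENNReal.ofReal (Real.sqrt 2 * n * A / M) := by
  classical
  have hM0 : 0 < M := hA.trans hAM
  set r := A/(4*M) with hrdef
  have hr : 0 < r := by positivity
  have hr1 : r < 1 := by
    rw [hrdef, div_lt_one (by linarith)]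
    nlinarith
  have hBr1 : Metric.ball (0:EuclideanSpace ℝ (Fin 2)) r ⊆ B1 :=
    Metric.ball_subset_ball (by linarith)
  have hd' : ∀ ℓ : Fin 2, ∃ j ≤ n, A ≤ |Dv f j (ee ℓ) 0| := by
    intro ℓ
    obtain ⟨j, hj, hAj⟩ := hd ℓ
    refine ⟨j, hj, ?_⟩
    rw [← iteratedDeriv_axis f hf (ee ℓ) (norm_ee ℓ) j]
    exact hAj
  set S := {z : EuclideanSpace ℝ (Fin 2) | ‖z‖ < r ∧ f z = 0 ∧ fderiv ℝ f z ≠ 0} with hSdef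
  rcases Nat.eq_zero_or_pos n with hn | hn
  · subst hn
    have hSempty : S = ∅ := by
      apply eq_empty_iff_forall_notMem.mpr
      intro z hz
      obtain ⟨j, hj, hAj⟩ := hd' 0
      interval_cases j
      rw [Dv_zero] at hAj
      have h1 := mvt_bound f hf (ee 0) (norm_ee 0) 0 M (fun p hp => hM 1 (by omega) p hp)
        (hBr1 (mem_ball_zero_iff.mpr hz.1))
      rw [Dv_zero, Dv_zero, hz.2.1, zero_sub, abs_neg] at h1
      have h2 : M * ‖z‖ < M * r := mul_lt_mul_of_pos_left hz.1 hM0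
      have h4 : M * r = A/4 := by rw [hrdef]; field_simp
      linarith
    rw [hSempty, measure_empty]
    exact zero_le
  have hnR : (0:ℝ) < n := by exact_mod_cast hn
  set C := Real.sqrt 2 * n * A / M with hCdef
  have hC : 0 < C := by positivity
  have hεbound : ∀ ε : ℝ, 0 < ε → μH[1] S ≤ ENNReal.ofReal ((1+ε) * C) := by
    intro ε hε
    obtain ⟨ja, hja, hAa⟩ := hd' 0
    obtain ⟨jb', hjb', hAb⟩ := hd' 1
    have h01 : (0:Fin 2) ≠ 1 := by decide
    have h10 : (1:Fin 2) ≠ 0 := by decide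
    have hhalf1 := half n f A M hA hAM hf hM 0 1 h01 jb' hjb' hAb ε hε
    have hhalf2 := half n f A M hA hAM hf hM 1 0 h10 ja hja hAa ε hε
    have hsub : S ⊆
        {z : EuclideanSpace ℝ (Fin 2) | ‖z‖ < A/(4*M) ∧ f z = 0 ∧ fderiv ℝ f z ≠ 0 ∧
          |Dv f 1 (ee 0) z| ≤ |Dv f 1 (ee 1) z|}
        ∪ {z : EuclideanSpace ℝ (Fin 2) | ‖z‖ < A/(4*M) ∧ f z = 0 ∧ fderiv ℝ f z ≠ 0 ∧
          |Dv f 1 (ee 1) z| ≤ |Dv f 1 (ee 0) z|} := by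
      intro z hz
      rcases le_total (|Dv f 1 (ee 0) z|) (|Dv f 1 (ee 1) z|) with h | h
      · left; exact ⟨hz.1, hz.2.1, hz.2.2, h⟩
      · right; exact ⟨hz.1, hz.2.1, hz.2.2, h⟩
    have hK : ENNReal.ofReal ((1+ε) * Real.sqrt 2) * ((n : ℝ≥0∞) * ENNReal.ofReal (2 * (A/(4*M))))
        = ENNReal.ofReal ((1+ε) * Real.sqrt 2 * ((n:ℝ) * (2 * (A/(4*M))))) := by
      rw [← ENNReal.ofReal_natCast n, ← ENNReal.ofReal_mul (by positivity),
        ← ENNReal.ofReal_mul (by positivity)]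
    have hsum : ENNReal.ofReal ((1+ε) * Real.sqrt 2 * ((n:ℝ) * (2 * (A/(4*M)))))
        + ENNReal.ofReal ((1+ε) * Real.sqrt 2 * ((n:ℝ) * (2 * (A/(4*M)))))
        = ENNReal.ofReal ((1+ε) * C) := by
      rw [← ENNReal.ofReal_add (by positivity) (by positivity)]
      congr 1
      rw [hCdef]
      field_simp
      ring
    calc μH[1] S ≤ μH[1] (_ ∪ _) := measure_mono hsub
      _ ≤ _ + _ := measure_union_le _ _
      _ ≤ _ + _ := add_le_add hhalf1 hhalf2
      _ = ENNReal.ofReal ((1+ε) * C) := by rw [hK, hsum]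
  apply ENNReal.le_of_forall_pos_le_add
  intro δ hδ _
  have hδR : (0:ℝ) < (δ:ℝ) := hδ
  have hε : (0:ℝ) < (δ:ℝ) / C := by positivity
  have h1 := hεbound ((δ:ℝ)/C) hε
  have h2 : (1 + (δ:ℝ)/C) * C = C + (δ:ℝ) := by field_simp
  calc μH[1] S ≤ ENNReal.ofReal ((1+(δ:ℝ)/C)*C) := h1
    _ = ENNReal.ofReal (C + (δ:ℝ)) := by rw [h2]
    _ ≤ ENNReal.ofReal C + ENNReal.ofReal (δ:ℝ) := ENNReal.ofReal_add_le
    _ = ENNReal.ofReal C + δ := by rw [ENNReal.ofReal_coe_nnreal]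
end
end

section
/- There exist absolute constants C, c > 0 with the following property. Let E be a real topological vector space, γ a Borel probability measure on E, and H ⊆ E a symmetric set (h ∈ H implies −h ∈ H) such that the Gaussian isoperimetric inequality holds for (γ, H): for every Borel set A ⊆ E, every c' ∈ ℝ and every t ≥ 0, γ(A) ≥ Φ(c') implies γ*(A + tH) ≥ Φ(c' + t). Let F : E → ℝ be Borel measurable, let M ∈ ℝ be a median of F under γ (i.e. γ({F ≤ M}) ≥ 1/2 and γ({F ≥ M}) ≥ 1/2), and suppose ε > 0, η > 0 and a Borel set 𝓔 ⊆ E with γ(𝓔) ≤ 1/4 are such that F(x + u) ≥ F(x) − ε for every x ∈ E \ 𝓔 and every u ∈ η·H. Then γ({x ∈ E : |F(x) − M| > ε}) ≤ C·e^{−c η²} + γ(𝓔). -/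
/-!
Identify `Φ` with the distribution function of `gaussianReal 0 1`, so that Chernoff bounds give
`Φ(-2) ≤ 1/4` and `1 - Φ(η - 2) ≤ e² e^{-η²/4}`. Both `{F ≤ M}` and `{F ≥ M} \ 𝓔` then have
measure at least `1/4 ≥ Φ(-2)`, and isoperimetry makes their `η • H`-enlargements have measure at
least `Φ(η - 2)`. Outside `𝓔` the enlargement of `{F ≥ M} \ 𝓔` lies in `{F ≥ M - ε}`, and (by the
symmetry of `H`) the enlargement of `{F ≤ M}` misses `{F > M + ε} \ 𝓔`.
-/

open MeasureTheory Set
open scoped ENNReal Pointwise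

noncomputable def stdGaussianCDF (s : ℝ) : ℝ :=
  ∫ x in Set.Iic s, Real.exp (-x ^ 2 / 2) / Real.sqrt (2 * Real.pi)

open ProbabilityTheory

lemma stdGaussianCDF_eq_gaussianReal (s : ℝ) :
    stdGaussianCDF s = (gaussianReal 0 1).real (Iic s) := by
  rw [measureReal_def, gaussianReal_apply_eq_integral _ one_ne_zero,
    ENNReal.toReal_ofReal
      (setIntegral_nonneg measurableSet_Iic fun x _ ↦ gaussianPDFReal_nonneg _ _ x)]
  simp [stdGaussianCDF, gaussianPDFReal, div_eq_inv_mul]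

lemma stdGaussianCDF_nonneg (s : ℝ) : 0 ≤ stdGaussianCDF s :=
  (stdGaussianCDF_eq_gaussianReal s).symm ▸ measureReal_nonneg

lemma stdGaussianCDF_le_exp (s : ℝ) {t : ℝ} (ht : t ≤ 0) :
    stdGaussianCDF s ≤ Real.exp (t ^ 2 / 2 - t * s) := by
  have h := measure_le_le_exp_mul_mgf (μ := gaussianReal 0 1) (X := id) s ht
    (integrable_exp_mul_gaussianReal t)
  rw [mgf_id_gaussianReal, ← Real.exp_add] at h
  rw [stdGaussianCDF_eq_gaussianReal]
  exact h.trans_eq (by push_cast; ring_nf)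

lemma one_sub_stdGaussianCDF_le_exp (s : ℝ) {t : ℝ} (ht : 0 ≤ t) :
    1 - stdGaussianCDF s ≤ Real.exp (t ^ 2 / 2 - t * s) := by
  have h := measure_ge_le_exp_mul_mgf (μ := gaussianReal 0 1) (X := id) s ht
    (integrable_exp_mul_gaussianReal t)
  rw [mgf_id_gaussianReal, ← Real.exp_add] at h
  rw [stdGaussianCDF_eq_gaussianReal, ← probReal_compl_eq_one_sub measurableSet_Iic, compl_Iic]
  calc (gaussianReal 0 1).real (Ioi s) ≤ (gaussianReal 0 1).real {x | s ≤ id x} :=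
        measureReal_mono fun x (hx : s < x) ↦ hx.le
    _ ≤ _ := h.trans_eq (by push_cast; ring_nf)

lemma ofReal_stdGaussianCDF_neg_two_le : ENNReal.ofReal (stdGaussianCDF (-2)) ≤ 1 / 4 := by
  have h4 : 4 ≤ Real.exp 2 := by linarith [Real.quadratic_le_exp_of_nonneg zero_le_two]
  have hΦ : stdGaussianCDF (-2) ≤ 1 / 4 := calc
    stdGaussianCDF (-2) ≤ Real.exp ((-2) ^ 2 / 2 - -2 * -2) := stdGaussianCDF_le_exp _ (by norm_num)
    _ = (Real.exp 2)⁻¹ := by rw [← Real.exp_neg]; norm_num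
    _ ≤ 1 / 4 := by rw [one_div]; gcongr
  simpa using ENNReal.ofReal_le_ofReal hΦ

-- Chernoff at `t = η / 2`; the slack in the exponent is `(η - 4)² / 8`.
lemma one_sub_stdGaussianCDF_sub_two_le {η : ℝ} (hη : 0 ≤ η) :
    1 - stdGaussianCDF (η - 2) ≤ Real.exp (2 - η ^ 2 / 4) :=
  (one_sub_stdGaussianCDF_le_exp (η - 2) (by positivity : 0 ≤ η / 2)).trans <|
    Real.exp_le_exp.mpr (by nlinarith [sq_nonneg (η - 4)])

lemma quarter_le_measure_sdiff {α : Type*} [MeasurableSpace α] {μ : Measure α} {S 𝓔 : Set α}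
    (hS : 1 / 2 ≤ μ S) (h𝓔 : μ 𝓔 ≤ 1 / 4) : 1 / 4 ≤ μ (S \ 𝓔) := by
  have hquarter : (1 / 4 : ℝ≥0∞) = 1 / 2 - 1 / 4 := by
    refine ENNReal.eq_sub_of_add_eq (by simp) ?_
    rw [ENNReal.div_add_div_same, ENNReal.div_eq_div_iff] <;> norm_num
  calc (1 / 4 : ℝ≥0∞) = 1 / 2 - 1 / 4 := hquarter
    _ ≤ μ S - μ 𝓔 := tsub_le_tsub hS h𝓔
    _ ≤ μ (S \ 𝓔) := le_measure_sdiff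

def GaussianIsoperimetric {E : Type*} [AddCommGroup E] [Module ℝ E] [MeasurableSpace E]
    (γ : Measure E) (H : Set E) : Prop :=
  ∀ A : Set E, MeasurableSet A → ∀ c t : ℝ, 0 ≤ t →
    ENNReal.ofReal (stdGaussianCDF c) ≤ γ A →
      ENNReal.ofReal (stdGaussianCDF (c + t)) ≤ γ (A + t • H)

section Concentration

variable {E : Type*} [AddCommGroup E] [Module ℝ E] [MeasurableSpace E]
  {γ : Measure E} [IsProbabilityMeasure γ] {H : Set E}

/-- Since `A + t • H` need not be measurable, its complement is controlled through a measurable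
superset `T`. -/
lemma GaussianIsoperimetric.measure_compl_le (hiso : GaussianIsoperimetric γ H) {A T : Set E}
    (hA : MeasurableSet A) {c t : ℝ} (ht : 0 ≤ t) (hAc : ENNReal.ofReal (stdGaussianCDF c) ≤ γ A)
    (hT : MeasurableSet T) (hAT : A + t • H ⊆ T) :
    γ Tᶜ ≤ ENNReal.ofReal (1 - stdGaussianCDF (c + t)) := by
  rw [prob_compl_eq_one_sub hT, ENNReal.ofReal_sub _ (stdGaussianCDF_nonneg _), ENNReal.ofReal_one]
  exact tsub_le_tsub_left ((hiso A hA c t ht hAc).trans (measure_mono hAT)) 1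

variable {F : E → ℝ} {M ε η : ℝ} {𝓔 : Set E}

lemma GaussianIsoperimetric.measure_setOf_lt_sub_le (hiso : GaussianIsoperimetric γ H)
    (hF : Measurable F) (hM : 1 / 2 ≤ γ {x | M ≤ F x}) (hη : 0 ≤ η)
    (h𝓔 : MeasurableSet 𝓔) (h𝓔γ : γ 𝓔 ≤ 1 / 4)
    (hF𝓔 : ∀ x ∉ 𝓔, ∀ u ∈ η • H, F x - ε ≤ F (x + u)) :
    γ {x | F x < M - ε} ≤ ENNReal.ofReal (1 - stdGaussianCDF (η - 2)) := by
  have hsub : {x | M ≤ F x} \ 𝓔 + η • H ⊆ {x | M - ε ≤ F x} := by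
    rintro _ ⟨x, ⟨hMx, hx𝓔⟩, u, hu, rfl⟩
    have := hF𝓔 x hx𝓔 u hu
    simp only [mem_ofPred_eq] at hMx ⊢
    linarith
  have h := hiso.measure_compl_le ((measurableSet_le measurable_const hF).diff h𝓔) hη
    (ofReal_stdGaussianCDF_neg_two_le.trans (quarter_le_measure_sdiff hM h𝓔γ))
    (measurableSet_le measurable_const hF) hsub
  simpa only [compl_ofPred, not_le, neg_add_eq_sub] using h

/-- The symmetry of `H` lets a point of `{F ≤ M} + η • H` be moved back into `{F ≤ M}`. -/
lemma GaussianIsoperimetric.measure_setOf_add_lt_sdiff_le (hiso : GaussianIsoperimetric γ H)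
    (hH : ∀ h ∈ H, -h ∈ H) (hF : Measurable F) (hM : 1 / 2 ≤ γ {x | F x ≤ M}) (hη : 0 ≤ η)
    (h𝓔 : MeasurableSet 𝓔)
    (hF𝓔 : ∀ x ∉ 𝓔, ∀ u ∈ η • H, F x - ε ≤ F (x + u)) :
    γ ({x | M + ε < F x} \ 𝓔) ≤ ENNReal.ofReal (1 - stdGaussianCDF (η - 2)) := by
  have hsub : {x | F x ≤ M} + η • H ⊆ ({x | M + ε < F x} \ 𝓔)ᶜ := by
    rintro _ ⟨x, hxM, _, ⟨h, hh, rfl⟩, rfl⟩ ⟨hlt, hx𝓔⟩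
    have := hF𝓔 (x + η • h) hx𝓔 (-(η • h)) (smul_neg η h ▸ smul_mem_smul_set (hH h hh))
    simp only [add_neg_cancel_right, mem_ofPred_eq] at this hxM hlt
    linarith
  have h := hiso.measure_compl_le (measurableSet_le hF measurable_const) hη
    (ofReal_stdGaussianCDF_neg_two_le.trans <| (ENNReal.div_le_div_left (by norm_num) 1).trans hM)
    ((measurableSet_lt measurable_const hF).diff h𝓔).compl hsub
  simpa only [compl_compl, neg_add_eq_sub] using h

end Concentration

/-- Gaussian concentration around the median: there are absolute
constants `C, c > 0` such that for any Borel probability measure `γ` on a real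
topological vector space `E`, a symmetric `H ⊆ E` satisfying the Gaussian isoperimetric
inequality, a Borel function `F : E → ℝ` with median `M`, and `ε, η > 0` with an
exceptional Borel set `𝓔` of measure `≤ 1/4` outside which `F(x + u) ≥ F(x) − ε` for
all `u ∈ η·H`, one has `γ(|F − M| > ε) ≤ C e^{−c η²} + γ(𝓔)`. -/
theorem stmt5 :
    ∃ C > (0 : ℝ), ∃ c > (0 : ℝ),
      ∀ (E : Type) [AddCommGroup E] [Module ℝ E] [TopologicalSpace E]
        [IsTopologicalAddGroup E] [ContinuousSMul ℝ E] [MeasurableSpace E] [BorelSpace E]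
        (γ : Measure E) [IsProbabilityMeasure γ] (H : Set E),
        (∀ h ∈ H, -h ∈ H) →
        (∀ A : Set E, MeasurableSet A → ∀ c' t : ℝ, 0 ≤ t →
          ENNReal.ofReal (stdGaussianCDF c') ≤ γ A →
          ENNReal.ofReal (stdGaussianCDF (c' + t)) ≤ γ (A + t • H)) →
        ∀ F : E → ℝ, Measurable F →
        ∀ M : ℝ, (1 / 2 : ℝ≥0∞) ≤ γ {x | F x ≤ M} → (1 / 2 : ℝ≥0∞) ≤ γ {x | M ≤ F x} →
        ∀ ε η : ℝ, 0 < ε → 0 < η →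
        ∀ 𝓔 : Set E, MeasurableSet 𝓔 → γ 𝓔 ≤ 1 / 4 →
        (∀ x ∉ 𝓔, ∀ u ∈ η • H, F x - ε ≤ F (x + u)) →
        γ {x | ε < |F x - M|} ≤ ENNReal.ofReal (C * Real.exp (-c * η ^ 2)) + γ 𝓔 := by
  refine ⟨2 * Real.exp 2, by positivity, 1 / 4, by norm_num, ?_⟩
  intro E _ _ _ _ _ _ _ γ _ H hH (hiso : GaussianIsoperimetric γ H) F hF M hM₁ hM₂ ε η _ hη
    𝓔 h𝓔 h𝓔γ hF𝓔
  have hcover : {x | ε < |F x - M|} ⊆ ({x | M + ε < F x} \ 𝓔 ∪ 𝓔) ∪ {x | F x < M - ε} := by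
    intro x hx
    rcases lt_abs.mp (show ε < |F x - M| from hx) with h | h
    · by_cases hx𝓔 : x ∈ 𝓔
      · exact .inl (.inr hx𝓔)
      · exact .inl (.inl ⟨show M + ε < F x by linarith, hx𝓔⟩)
    · exact .inr (show F x < M - ε by linarith)
  have htail :
      2 * (1 - stdGaussianCDF (η - 2)) ≤ 2 * Real.exp 2 * Real.exp (-(1 / 4) * η ^ 2) := by
    rw [mul_assoc, ← Real.exp_add, show 2 + -(1 / 4) * η ^ 2 = 2 - η ^ 2 / 4 by ring]
    linarith [one_sub_stdGaussianCDF_sub_two_le hη.le]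
  calc γ {x | ε < |F x - M|}
      ≤ γ ({x | M + ε < F x} \ 𝓔) + γ 𝓔 + γ {x | F x < M - ε} :=
        (measure_mono hcover).trans <|
          (measure_union_le _ _).trans (by gcongr; exact measure_union_le _ _)
    _ ≤ ENNReal.ofReal (1 - stdGaussianCDF (η - 2)) + γ 𝓔 +
          ENNReal.ofReal (1 - stdGaussianCDF (η - 2)) := by
        gcongr
        · exact hiso.measure_setOf_add_lt_sdiff_le hH hF hM₁ hη.le h𝓔 hF𝓔
        · exact hiso.measure_setOf_lt_sub_le hF hM₂ hη.le h𝓔 h𝓔γ hF𝓔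
    _ ≤ ENNReal.ofReal (2 * Real.exp 2 * Real.exp (-(1 / 4) * η ^ 2)) + γ 𝓔 := by
        rw [add_right_comm, ← two_mul, ← ENNReal.ofReal_ofNat 2, ← ENNReal.ofReal_mul zero_le_two]
        exact add_le_add_left (ENNReal.ofReal_le_ofReal htail) _
end

section
/- There exist absolute constants C > 0 and T₀ > 0 such that for every Borel probability measure ν on ℝ supported in [0,2π], every T ≥ T₀ and every θ ∈ ℝ, one has I_ν(θ) := ∫₀^{2π} exp(−(T²/2)·‖v_θ − v_α‖²) dν(α) ≤ C · ω_ν(1/T). -/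
open MeasureTheory Set
open scoped ENNReal Real

/-!
The squared chord `‖v_θ - v_α‖² = 2 - 2 cos (θ - α)` is at least `(4 / π²) d²`, where `d` is the
distance from `θ - α` to `2πℤ`, i.e. the norm of `θ - α` in `AddCircle (2π)`. Cut `[0, 2π]` into
the shells `k / T ≤ d ≤ (k + 1) / T`: on the `k`-th shell the integrand is at most `q ^ k` with
`q = exp (-2 / π²)`, and since for `α ∈ [0, 2π]` only two multiples of `2π` can realise `d`, each
shell is covered by four intervals of length `1 / T`. Summing the geometric series gives
`C = 4 / (1 - q)`.
-/

open Real

/-- Lévy's concentration function; `levyConcentration ν δ` is the paper's `ω_ν(δ)`. -/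
noncomputable def levyConcentration (ν : Measure ℝ) (δ : ℝ) : ℝ≥0∞ :=
  ⨆ t : ℝ, ν (Icc t (t + δ))

lemma measure_Icc_le_levyConcentration (ν : Measure ℝ) (t δ : ℝ) :
    ν (Icc t (t + δ)) ≤ levyConcentration ν δ :=
  le_iSup (fun t => ν (Icc t (t + δ))) t

lemma measure_abs_sub_mem_Icc_le (ν : Measure ℝ) (x a δ : ℝ) :
    ν {α | |x - α| ∈ Icc a (a + δ)} ≤ 2 * levyConcentration ν δ := by
  have hsub : {α | |x - α| ∈ Icc a (a + δ)} ⊆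
      Icc (x - a - δ) (x - a - δ + δ) ∪ Icc (x + a) (x + a + δ) := by
    rintro α ⟨ha, haδ⟩
    rcases le_total α x with h | h
    · rw [abs_of_nonneg (sub_nonneg.2 h)] at ha haδ
      exact Or.inl ⟨by linarith, by linarith⟩
    · rw [abs_of_nonpos (sub_nonpos.2 h)] at ha haδ
      exact Or.inr ⟨by linarith, by linarith⟩
  calc ν {α | |x - α| ∈ Icc a (a + δ)}
      ≤ ν (Icc (x - a - δ) (x - a - δ + δ)) + ν (Icc (x + a) (x + a + δ)) :=
        (measure_mono hsub).trans (measure_union_le _ _)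
    _ ≤ levyConcentration ν δ + levyConcentration ν δ := by
        gcongr <;> exact measure_Icc_le_levyConcentration ν _ δ
    _ = 2 * levyConcentration ν δ := (two_mul _).symm

lemma round_monotone {α : Type*} [Field α] [LinearOrder α] [IsStrictOrderedRing α]
    [FloorRing α] : Monotone (round : α → ℤ) := fun a b hab => by
  simp only [round_eq]; exact Int.floor_mono (by linarith)

lemma round_inv_mul_sub_eq {p : ℝ} (hp : 0 < p) (θ : ℝ) {α : ℝ} (hα : α ∈ Icc 0 p) :
    round (p⁻¹ * (θ - α)) = round (p⁻¹ * θ) - 1 ∨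
      round (p⁻¹ * (θ - α)) = round (p⁻¹ * θ) := by
  have hle : p⁻¹ * α ≤ 1 := inv_mul_le_one_of_le₀ hα.2 hp.le
  have hlo := round_monotone (show p⁻¹ * θ - 1 ≤ p⁻¹ * (θ - α) by
    rw [mul_sub]; linarith)
  have hhi := round_monotone (show p⁻¹ * (θ - α) ≤ p⁻¹ * θ by
    rw [mul_sub]; linarith [mul_nonneg (inv_nonneg.2 hp.le) hα.1])
  rw [round_sub_one] at hlo
  omega

lemma measure_addCircle_shell_le {p : ℝ} (hp : 0 < p) (ν : Measure ℝ) (θ a δ : ℝ) :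
    ν {α ∈ Icc 0 p | ‖((θ - α : ℝ) : AddCircle p)‖ ∈ Icc a (a + δ)} ≤
      4 * levyConcentration ν δ := by
  set M := round (p⁻¹ * θ)
  have hsub : {α ∈ Icc 0 p | ‖((θ - α : ℝ) : AddCircle p)‖ ∈ Icc a (a + δ)} ⊆
      {α | |(θ - (M - 1 : ℤ) * p) - α| ∈ Icc a (a + δ)} ∪
        {α | |(θ - M * p) - α| ∈ Icc a (a + δ)} := by
    rintro α ⟨hα, hshell⟩
    rw [AddCircle.norm_eq, sub_right_comm] at hshell
    rcases round_inv_mul_sub_eq hp θ hα with h | h <;> rw [h] at hshell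
    · exact Or.inl hshell
    · exact Or.inr hshell
  calc _ ≤ 2 * levyConcentration ν δ + 2 * levyConcentration ν δ :=
        (measure_mono hsub).trans <| (measure_union_le _ _).trans <|
          add_le_add (measure_abs_sub_mem_Icc_le ..) (measure_abs_sub_mem_Icc_le ..)
    _ = 4 * levyConcentration ν δ := by rw [← add_mul]; norm_num

lemma four_div_pi_sq_mul_norm_sq_le (x : ℝ) :
    4 / π ^ 2 * ‖(x : AddCircle (2 * π))‖ ^ 2 ≤ 2 - 2 * cos x := by
  set y := x - round ((2 * π)⁻¹ * x) * (2 * π)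
  have hnorm : ‖(x : AddCircle (2 * π))‖ = |y| := AddCircle.norm_eq _
  have hy : |y| ≤ π := by
    simpa [hnorm, abs_of_pos two_pi_pos] using
      AddCircle.norm_le_half_period (2 * π) (x := (x : AddCircle (2 * π))) two_pi_pos.ne'
  have hcos : cos y = cos x := cos_sub_int_mul_two_pi x _
  rw [hnorm, sq_abs, ← hcos]
  linarith [cos_le_one_sub_mul_cos_sq hy, show 4 / π ^ 2 * y ^ 2 = 2 * (2 / π ^ 2 * y ^ 2) by ring]

lemma chord_sq_eq (θ α : ℝ) :
    (cos θ - cos α) ^ 2 + (sin θ - sin α) ^ 2 = 2 - 2 * cos (θ - α) := by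
  linear_combination sin_sq_add_cos_sq θ + sin_sq_add_cos_sq α + 2 * cos_sub θ α

lemma exp_neg_mul_chord_sq_le {T : ℝ} (hT : 0 < T) {θ α : ℝ} {k : ℕ}
    (hk : k * (1 / T) ≤ ‖((θ - α : ℝ) : AddCircle (2 * π))‖) :
    exp (-(T ^ 2 / 2) * ((cos θ - cos α) ^ 2 + (sin θ - sin α) ^ 2)) ≤
      exp (-(2 / π ^ 2)) ^ k := by
  set n := ‖((θ - α : ℝ) : AddCircle (2 * π))‖
  have hkn : (k : ℝ) ≤ T * n := by rwa [mul_one_div, div_le_iff₀' hT] at hk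
  have hkk : (k : ℝ) ≤ k ^ 2 := by exact_mod_cast Nat.le_self_pow two_ne_zero k
  rw [← exp_nat_mul, exp_le_exp, chord_sq_eq]
  have : 2 / π ^ 2 * k ≤ T ^ 2 / 2 * (2 - 2 * cos (θ - α)) := calc
    2 / π ^ 2 * k ≤ 2 / π ^ 2 * (T * n) ^ 2 := by gcongr; exact hkk.trans (by gcongr)
    _ = T ^ 2 / 2 * (4 / π ^ 2 * n ^ 2) := by ring
    _ ≤ T ^ 2 / 2 * (2 - 2 * cos (θ - α)) := by gcongr; exact four_div_pi_sq_mul_norm_sq_le _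
  linarith

lemma setLIntegral_le_tsum_mul_measure_shell {X : Type*} [MeasurableSpace X] {ν : Measure X}
    {s : Set X} (hs : MeasurableSet s) {f : X → ℝ≥0∞} {r : X → ℝ} (hr : Measurable r)
    (hr0 : ∀ x ∈ s, 0 ≤ r x) {δ : ℝ} (hδ : 0 < δ) (c : ℕ → ℝ≥0∞)
    (hfc : ∀ (k : ℕ), ∀ x ∈ s, k * δ ≤ r x → f x ≤ c k) :
    ∫⁻ x in s, f x ∂ν ≤ ∑' k : ℕ, c k * ν (s ∩ r ⁻¹' Icc (k * δ) (k * δ + δ)) := by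
  have hcover : s ⊆ ⋃ k : ℕ, s ∩ r ⁻¹' Icc (k * δ) (k * δ + δ) := fun x hx => by
    have h0 : 0 ≤ r x / δ := div_nonneg (hr0 x hx) hδ.le
    refine mem_iUnion.2 ⟨⌊r x / δ⌋₊, hx, ?_, ?_⟩
    · exact (le_div_iff₀ hδ).1 (Nat.floor_le h0)
    · rw [← add_one_mul]; exact ((div_lt_iff₀ hδ).1 (Nat.lt_floor_add_one _)).le
  calc ∫⁻ x in s, f x ∂ν
      ≤ ∫⁻ x in ⋃ k : ℕ, s ∩ r ⁻¹' Icc (k * δ) (k * δ + δ), f x ∂ν := lintegral_mono_set hcover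
    _ ≤ ∑' k : ℕ, ∫⁻ x in s ∩ r ⁻¹' Icc (k * δ) (k * δ + δ), f x ∂ν := lintegral_iUnion_le _ _
    _ ≤ ∑' k : ℕ, c k * ν (s ∩ r ⁻¹' Icc (k * δ) (k * δ + δ)) := by
        refine ENNReal.tsum_le_tsum fun k => ?_
        calc _ ≤ ∫⁻ _ in s ∩ r ⁻¹' Icc (k * δ) (k * δ + δ), c k ∂ν :=
              setLIntegral_mono' (hs.inter (hr measurableSet_Icc))
                fun x hx => hfc k x hx.1 hx.2.1
          _ = _ := setLIntegral_const _ _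

/-- Claim bounding `I_ν` by the modulus of continuity: there are
absolute constants `C, T₀ > 0` such that for every Borel probability measure `ν` on `ℝ`
supported in `[0, 2π]`, every `T ≥ T₀` and every `θ`,
`∫₀^{2π} exp(−(T²/2)‖v_θ − v_α‖²) dν(α) ≤ C ω_ν(1/T)`. -/
theorem stmt7 :
    ∃ C > (0 : ℝ), ∃ T₀ > (0 : ℝ),
      ∀ (ν : Measure ℝ) [IsProbabilityMeasure ν],
        ν (Set.Icc 0 (2 * π))ᶜ = 0 →
        ∀ T : ℝ, T₀ ≤ T → ∀ θ : ℝ,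
          (∫⁻ α in Set.Icc 0 (2 * π),
              ENNReal.ofReal (Real.exp (-(T ^ 2 / 2) *
                ((Real.cos θ - Real.cos α) ^ 2 + (Real.sin θ - Real.sin α) ^ 2))) ∂ν)
            ≤ ENNReal.ofReal C * ⨆ t : ℝ, ν (Set.Icc t (t + 1 / T)) := by
  set q := exp (-(2 / π ^ 2))
  have hq : q < 1 := exp_lt_one_iff.2 (by simp only [neg_lt_zero]; positivity)
  have h1q : 0 < 1 - q := sub_pos.2 hq
  refine ⟨4 * (1 - q)⁻¹, by positivity, 1, one_pos, fun ν _ _ T hT θ => ?_⟩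
  have hT : 0 < T := one_pos.trans_le hT
  have hr : Measurable fun α : ℝ => ‖((θ - α : ℝ) : AddCircle (2 * π))‖ :=
    (continuous_norm.comp ((AddCircle.continuous_mk' _).comp
      (continuous_const.sub continuous_id))).measurable
  calc _ ≤ ∑' k : ℕ, ENNReal.ofReal q ^ k * ν (Icc 0 (2 * π) ∩
          (fun α : ℝ => ‖((θ - α : ℝ) : AddCircle (2 * π))‖) ⁻¹'
            Icc (k * (1 / T)) (k * (1 / T) + 1 / T)) :=
        setLIntegral_le_tsum_mul_measure_shell measurableSet_Icc hr (fun _ _ => norm_nonneg _)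
          (by positivity) _ fun k α _ hk => (ENNReal.ofReal_le_ofReal
            (exp_neg_mul_chord_sq_le hT hk)).trans_eq (ENNReal.ofReal_pow (exp_pos _).le k)
    _ ≤ ∑' k : ℕ, ENNReal.ofReal q ^ k * (4 * levyConcentration ν (1 / T)) :=
        ENNReal.tsum_le_tsum fun k => by
          gcongr; exact measure_addCircle_shell_le two_pi_pos ν θ _ _
    _ = (1 - ENNReal.ofReal q)⁻¹ * (4 * levyConcentration ν (1 / T)) := by
        rw [ENNReal.tsum_mul_right, ENNReal.tsum_geometric]
    _ = ENNReal.ofReal (4 * (1 - q)⁻¹) * levyConcentration ν (1 / T) := by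
        rw [ENNReal.ofReal_mul zero_le_four, ENNReal.ofReal_inv_of_pos h1q,
          ENNReal.ofReal_sub _ (exp_pos _).le, ENNReal.ofReal_one, ENNReal.ofReal_ofNat]
        ring
end

section
/- Let ψ : ℝ → ℝ be 2π-periodic and strictly positive, with θ ↦ √(ψ(θ)) five times continuously differentiable. For n ∈ ℤ define f_n : ℝ² → ℂ by f_n(z) = ∫₀^{2π} e^{−i z·v_θ} e^{i n θ} √(ψ(θ)) dθ. Then there is a constant C > 0 (depending only on ψ) such that for every real R ≥ 1, every integer n with |n| ≥ 10R, and every z ∈ ℝ² with ‖z‖ ≤ R, one has |f_n(z)| ≤ C/|n|³. -/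
open MeasureTheory Set intervalIntegral
open scoped Real

/-!
Write the integrand as `e^{iφ} g` with phase `φ(θ) = nθ - z·v_θ` and `g = √ψ`. Since
`|n| ≥ 10‖z‖`, the derivative `φ' = n + z₁ sin θ - z₂ cos θ` stays above `|n|/2` in absolute
value. Integrating `e^{iφ} g = (e^{iφ})' · g/(iφ')` by parts over a full period (the boundary
terms cancel by periodicity, as `n` is an integer) gives `∫ e^{iφ} g = i ∫ e^{iφ} (u g)'` with
`u = 1/φ'`. After three steps the integrand is `(u (u (u g)')')'`, which Leibniz' rule bounds by
`64 A³ M` when the first three derivatives of `u` and of `g` are bounded by `A` and `M`.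
Finally `A = O(1/|n|)`, by bootstrapping the identity `u' = -φ'' u²`.
-/

def IteratedDerivBound (f : ℝ → ℝ) (m : ℕ) (K : ℝ) : Prop :=
  ∀ j ≤ m, ∀ x, |iteratedDeriv j f x| ≤ K

namespace IteratedDerivBound

variable {f g : ℝ → ℝ} {m : ℕ} {A B : ℝ}

lemma nonneg (hf : IteratedDerivBound f m A) : 0 ≤ A :=
  (abs_nonneg _).trans (hf 0 (Nat.zero_le m) 0)

lemma mono {m' : ℕ} {A' : ℝ} (hf : IteratedDerivBound f m A) (hm : m' ≤ m) (hA : A ≤ A') :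
    IteratedDerivBound f m' A' :=
  fun j hj x => (hf j (hj.trans hm) x).trans hA

lemma deriv (hf : IteratedDerivBound f (m + 1) A) : IteratedDerivBound (deriv f) m A := by
  intro j hj x
  rw [← iteratedDeriv_succ']
  exact hf (j + 1) (by omega) x

lemma of_deriv (h0 : ∀ x, |f x| ≤ A) (hf : IteratedDerivBound (_root_.deriv f) m A) :
    IteratedDerivBound f (m + 1) A := by
  rintro (_ | j) hj x
  · simpa using h0 x
  · rw [iteratedDeriv_succ']
    exact hf j (by omega) x

lemma neg (hf : IteratedDerivBound f m A) : IteratedDerivBound (-f) m A := by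
  intro j hj x
  rw [iteratedDeriv_neg, abs_neg]
  exact hf j hj x

lemma mul (hf : IteratedDerivBound f m A) (hg : IteratedDerivBound g m B)
    (hf' : ContDiff ℝ m f) (hg' : ContDiff ℝ m g) :
    IteratedDerivBound (f * g) m (2 ^ m * A * B) := by
  intro j hj x
  have hjm : (j : WithTop ℕ∞) ≤ m := by exact_mod_cast hj
  rw [iteratedDeriv_mul ((hf'.of_le hjm).contDiffAt) ((hg'.of_le hjm).contDiffAt)]
  calc |∑ i ∈ Finset.range (j + 1),
          (j.choose i : ℝ) * iteratedDeriv i f x * iteratedDeriv (j - i) g x|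
      ≤ ∑ i ∈ Finset.range (j + 1), (j.choose i : ℝ) * A * B := by
        refine (Finset.abs_sum_le_sum_abs _ _).trans (Finset.sum_le_sum fun i hi => ?_)
        have hi : i ≤ j := Nat.lt_succ_iff.mp (Finset.mem_range.mp hi)
        rw [abs_mul, abs_mul, Nat.abs_cast]
        have := hf.nonneg
        gcongr
        · exact hf i (hi.trans hj) x
        · exact hg (j - i) (by omega) x
    _ = 2 ^ j * A * B := by
        rw [← Finset.sum_mul, ← Finset.sum_mul]
        exact_mod_cast congrArg (fun t : ℕ => (t : ℝ) * A * B) (Nat.sum_range_choose j)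
    _ ≤ 2 ^ m * A * B := by
        have := hf.nonneg
        have := hg.nonneg
        gcongr
        norm_num

lemma inv_succ {c : ℝ → ℝ} {A' : ℝ} (hc : ContDiff ℝ (m + 1) c) (hc0 : ∀ x, c x ≠ 0)
    (hu : IteratedDerivBound (fun x => (c x)⁻¹) m A) (hc' : IteratedDerivBound (_root_.deriv c) m B)
    (hA : A ≤ A') (hB : 2 ^ m * B * (2 ^ m * A * A) ≤ A') :
    IteratedDerivBound (fun x => (c x)⁻¹) (m + 1) A' := by
  have hus : ContDiff ℝ m (fun x => (c x)⁻¹) := (hc.of_le (by simp)).inv hc0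
  have hderiv : _root_.deriv (fun x => (c x)⁻¹)
      = -(_root_.deriv c * ((fun x => (c x)⁻¹) * fun x => (c x)⁻¹)) := by
    funext x
    rw [((hc.differentiable (by simp) x).hasDerivAt.fun_inv (hc0 x)).deriv]
    simp only [Pi.neg_apply, Pi.mul_apply]
    field_simp
  refine of_deriv (fun x => (hu 0 (Nat.zero_le m) x).trans hA) ?_
  rw [hderiv]
  exact ((hc'.mul (hu.mul hu hus hus) (contDiff_succ_iff_deriv.mp hc).2.2
    (hus.mul hus)).neg).mono le_rfl hB

lemma deriv_mul {u h : ℝ → ℝ} (hu : IteratedDerivBound u (m + 1) A)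
    (hh : IteratedDerivBound h (m + 1) B) (hu' : ContDiff ℝ (m + 1) u)
    (hh' : ContDiff ℝ (m + 1) h) :
    IteratedDerivBound (_root_.deriv (u * h)) m (2 ^ (m + 1) * A * B) :=
  (hu.mul hh (by exact_mod_cast hu') (by exact_mod_cast hh')).deriv

end IteratedDerivBound

lemma Function.Periodic.deriv {f : ℝ → ℝ} {T : ℝ} (hf : Function.Periodic f T) :
    Function.Periodic (_root_.deriv f) T := fun x => by
  rw [← deriv_comp_add_const]
  exact congrArg (_root_.deriv · x) (funext fun y => hf y)

lemma Function.Periodic.iteratedDeriv {f : ℝ → ℝ} {T : ℝ} (hf : Function.Periodic f T) (n : ℕ) :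
    Function.Periodic (iteratedDeriv n f) T := by
  induction n with
  | zero => simpa using hf
  | succ n ih => simpa only [iteratedDeriv_succ] using ih.deriv

lemma exists_iteratedDerivBound_of_periodic {g : ℝ → ℝ} {m : ℕ} {T : ℝ} (hg : ContDiff ℝ m g)
    (hper : Function.Periodic g T) (hT : T ≠ 0) : ∃ K, IteratedDerivBound g m K := by
  set S : ℝ → ℝ := fun x => ∑ j ∈ Finset.range (m + 1), |iteratedDeriv j g x|
  have hS : Continuous S := continuous_finsetSum _ fun j hj =>
    (hg.continuous_iteratedDeriv j (by exact_mod_cast Finset.mem_range_succ_iff.mp hj)).abs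
  have hSper : Function.Periodic S T := fun x => by simp only [S, (hper.iteratedDeriv _) x]
  obtain ⟨K, hK⟩ := isBounded_iff_forall_norm_le.mp (hSper.isBounded_of_continuous hT hS)
  refine ⟨K, fun j hj x => ?_⟩
  calc |iteratedDeriv j g x| ≤ S x :=
        Finset.single_le_sum (f := fun i => |iteratedDeriv i g x|) (fun i _ => abs_nonneg _)
          (Finset.mem_range_succ_iff.mpr hj)
    _ ≤ K := (le_abs_self _).trans (hK _ (Set.mem_range_self x))

section IntegrationByParts

open Complex

variable {φ c : ℝ → ℝ} {T : ℝ}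

lemma integral_cexp_mul_eq_I_mul_integral_deriv (hφ : ∀ x, HasDerivAt φ (c x) x)
    (hc : Continuous c) (hper : Function.Periodic (fun x => cexp (φ x * I)) T) {k : ℝ → ℝ}
    (hk : ContDiff ℝ 1 k) (hkper : Function.Periodic k T) :
    ∫ x in (0)..T, cexp (φ x * I) * ((c x * k x : ℝ) : ℂ)
      = I * ∫ x in (0)..T, cexp (φ x * I) * ((deriv k x : ℝ) : ℂ) := by
  obtain ⟨hkd, hk'⟩ := contDiff_one_iff_deriv.mp hk
  have hE : Continuous fun x => cexp (φ x * I) := by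
    have : Continuous φ := continuous_iff_continuousAt.mpr fun x => (hφ x).continuousAt
    fun_prop
  have hint₁ : IntervalIntegrable (fun x => cexp (φ x * I) * ((c x * k x : ℝ) : ℂ)) volume 0 T :=
    (hE.mul (continuous_ofReal.comp (hc.mul hk.continuous))).intervalIntegrable _ _
  have hint₂ : IntervalIntegrable (fun x => cexp (φ x * I) * ((deriv k x : ℝ) : ℂ)) volume 0 T :=
    (hE.mul (continuous_ofReal.comp hk')).intervalIntegrable _ _
  have hboundary : cexp (φ T * I) * (k T : ℂ) - cexp (φ 0 * I) * (k 0 : ℂ) = 0 := by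
    have h₁ := hper 0
    have h₂ := hkper 0
    simp only [zero_add] at h₁ h₂
    rw [h₁, h₂, sub_self]
  have hFTC : ∫ x in (0)..T, (I * (cexp (φ x * I) * ((c x * k x : ℝ) : ℂ))
      + cexp (φ x * I) * ((deriv k x : ℝ) : ℂ)) = 0 := by
    rw [integral_eq_sub_of_hasDerivAt (f := fun x => cexp (φ x * I) * (k x : ℂ)) (fun x _ => ?_)
      ((hint₁.const_mul I).add hint₂), hboundary]
    exact (((hφ x).ofReal_comp.mul_const I).cexp.fun_mul (hkd x).hasDerivAt.ofReal_comp).congr_deriv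
      (by push_cast; ring)
  rw [integral_add (hint₁.const_mul I) hint₂, intervalIntegral.integral_const_mul] at hFTC
  linear_combination (-I) * hFTC + (∫ x in (0)..T, cexp (φ x * I) * ((c x * k x : ℝ) : ℂ)) * I_mul_I

lemma integral_cexp_mul_eq_I_pow_mul_integral_iterate (hφ : ∀ x, HasDerivAt φ (c x) x)
    (hc : Continuous c) (hper : Function.Periodic (fun x => cexp (φ x * I)) T) {u : ℝ → ℝ}
    (hcu : ∀ x, c x * u x = 1) (huper : Function.Periodic u T) (m : ℕ) {g : ℝ → ℝ}
    (hu : ContDiff ℝ m u) (hg : ContDiff ℝ m g) (hgper : Function.Periodic g T) :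
    ∫ x in (0)..T, cexp (φ x * I) * (g x : ℂ)
      = I ^ m * ∫ x in (0)..T, cexp (φ x * I) * ((((fun h => deriv (u * h))^[m] g) x : ℝ) : ℂ) := by
  induction m generalizing g with
  | zero => simp
  | succ m ih =>
    have hug : ContDiff ℝ (m + 1) (u * g) := by exact_mod_cast hu.mul hg
    have hg_eq : ∀ x, g x = c x * (u * g) x := fun x => by
      rw [Pi.mul_apply, ← mul_assoc, hcu, one_mul]
    simp_rw [hg_eq]
    rw [integral_cexp_mul_eq_I_mul_integral_deriv hφ hc hper (hug.of_le (by simp))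
      (huper.mul hgper), ih (hu.of_le (by simp)) (contDiff_succ_iff_deriv.mp hug).2.2
      (huper.mul hgper).deriv, Function.iterate_succ_apply]
    ring

lemma norm_integral_cexp_mul_le (hφ : ∀ x, HasDerivAt φ (c x) x) (hc0 : ∀ x, c x ≠ 0)
    (hper : Function.Periodic (fun x => cexp (φ x * I)) T) (hcper : Function.Periodic c T)
    (hu : ContDiff ℝ 3 fun x => (c x)⁻¹) {A : ℝ} (huA : IteratedDerivBound (fun x => (c x)⁻¹) 3 A)
    {g : ℝ → ℝ} {M : ℝ} (hg : ContDiff ℝ 3 g) (hgper : Function.Periodic g T)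
    (hgM : IteratedDerivBound g 3 M) :
    ‖∫ x in (0)..T, cexp (φ x * I) * (g x : ℂ)‖ ≤ 64 * A ^ 3 * M * |T| := by
  set u : ℝ → ℝ := fun x => (c x)⁻¹
  have hc : Continuous c :=
    (hu.continuous.inv₀ fun x => inv_ne_zero (hc0 x)).congr fun x => inv_inv (c x)
  have hg₁ : ContDiff ℝ 2 (deriv (u * g)) := (contDiff_succ_iff_deriv.mp (hu.mul hg)).2.2
  have hg₂ : ContDiff ℝ 1 (deriv (u * deriv (u * g))) :=
    (contDiff_succ_iff_deriv.mp ((hu.of_le (by norm_num)).mul hg₁)).2.2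
  have hbound : IteratedDerivBound (deriv (u * deriv (u * deriv (u * g)))) 0 (64 * A ^ 3 * M) := by
    have h₁ := huA.deriv_mul hgM hu hg
    have h₂ := (huA.mono (by norm_num) le_rfl).deriv_mul h₁ (hu.of_le (by norm_num)) hg₁
    have h₃ := (huA.mono (by norm_num) le_rfl).deriv_mul h₂ (hu.of_le (by norm_num)) hg₂
    exact h₃.mono le_rfl (le_of_eq (by ring))
  rw [integral_cexp_mul_eq_I_pow_mul_integral_iterate hφ hc hper (fun x => mul_inv_cancel₀ (hc0 x))
    (hcper.comp Inv.inv) 3 hu hg hgper, norm_mul, norm_pow, norm_I, one_pow, one_mul]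
  refine (intervalIntegral.norm_integral_le_of_norm_le_const fun x _ => ?_).trans_eq
    (by rw [sub_zero])
  rw [norm_mul, norm_exp_ofReal_mul_I, one_mul, norm_real, Real.norm_eq_abs]
  exact hbound 0 le_rfl x

end IntegrationByParts

section Phase

open Real

variable (ν a b : ℝ)

lemma hasDerivAt_phase (θ : ℝ) :
    HasDerivAt (fun θ => ν * θ - (a * cos θ + b * sin θ)) (ν + a * sin θ - b * cos θ) θ := by
  have := ((hasDerivAt_id θ).const_mul ν).sub
    (((hasDerivAt_cos θ).const_mul a).add ((hasDerivAt_sin θ).const_mul b))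
  exact this.congr_deriv (by ring)

lemma periodic_cexp_phase (n : ℤ) :
    Function.Periodic
      (fun θ => Complex.exp (((n * θ - (a * cos θ + b * sin θ) : ℝ) : ℂ) * Complex.I)) (2 * π) :=
      fun θ => by
  simp only [cos_add_two_pi, sin_add_two_pi]
  rw [show ((n * (θ + 2 * π) - (a * cos θ + b * sin θ) : ℝ) : ℂ) * Complex.I
      = ((n * θ - (a * cos θ + b * sin θ) : ℝ) : ℂ) * Complex.I + n * (2 * π * Complex.I) by
    push_cast; ring, Complex.exp_add, Complex.exp_int_mul_two_pi_mul_I, mul_one]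

lemma periodic_phase_deriv : Function.Periodic (fun θ => ν + a * sin θ - b * cos θ) (2 * π) :=
  fun θ => by simp only [cos_add_two_pi, sin_add_two_pi]

lemma deriv_phase_deriv :
    deriv (fun θ => ν + a * sin θ - b * cos θ) = fun θ => a * cos θ + b * sin θ := by
  funext θ
  refine ((((hasDerivAt_sin θ).const_mul a).const_add ν).sub
    ((hasDerivAt_cos θ).const_mul b)).deriv.trans ?_
  ring

lemma iteratedDerivBound_cos_add_sin (m : ℕ) :
    IteratedDerivBound (fun θ => a * cos θ + b * sin θ) m (|a| + |b|) := by
  intro j _ θ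
  rw [iteratedDeriv_fun_add (by fun_prop) (by fun_prop), iteratedDeriv_const_mul_field,
    iteratedDeriv_const_mul_field]
  calc |a * iteratedDeriv j cos θ + b * iteratedDeriv j sin θ|
      ≤ |a| * |iteratedDeriv j cos θ| + |b| * |iteratedDeriv j sin θ| :=
        (abs_add_le _ _).trans_eq (by rw [abs_mul, abs_mul])
    _ ≤ |a| * 1 + |b| * 1 := by
        gcongr
        · exact abs_iteratedDeriv_cos_le_one j θ
        · exact abs_iteratedDeriv_sin_le_one j θ
    _ = |a| + |b| := by ring

variable {ν a b}

lemma half_abs_le_abs_phase_deriv (h : 5 * (|a| + |b|) ≤ |ν|) (θ : ℝ) :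
    |ν| / 2 ≤ |ν + a * sin θ - b * cos θ| := by
  have hs : |a * sin θ| ≤ |a| := by
    rw [abs_mul]; exact mul_le_of_le_one_right (abs_nonneg a) (abs_sin_le_one θ)
  have hc : |b * cos θ| ≤ |b| := by
    rw [abs_mul]; exact mul_le_of_le_one_right (abs_nonneg b) (abs_cos_le_one θ)
  have := abs_sub_abs_le_abs_sub ν (b * cos θ - a * sin θ)
  have := abs_sub (b * cos θ) (a * sin θ)
  rw [show ν - (b * cos θ - a * sin θ) = ν + a * sin θ - b * cos θ by ring] at *
  linarith [abs_nonneg a, abs_nonneg b]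

lemma phase_deriv_ne_zero (h : 5 * (|a| + |b|) ≤ |ν|) (hν : ν ≠ 0) (θ : ℝ) :
    ν + a * sin θ - b * cos θ ≠ 0 :=
  abs_pos.mp ((half_pos (abs_pos.mpr hν)).trans_le (half_abs_le_abs_phase_deriv h θ))

lemma iteratedDerivBound_inv_phase_deriv (h : 5 * (|a| + |b|) ≤ |ν|) (hν : ν ≠ 0) :
    IteratedDerivBound (fun θ => (ν + a * sin θ - b * cos θ)⁻¹) 3 (64 / |ν|) := by
  set c : ℝ → ℝ := fun θ => ν + a * sin θ - b * cos θ
  have hc_ne := phase_deriv_ne_zero h hν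
  have hν_pos : 0 < |ν| := abs_pos.mpr hν
  have hc_ge := half_abs_le_abs_phase_deriv h
  have hc' : IteratedDerivBound (deriv c) 2 (|a| + |b|) := by
    simpa only [c, deriv_phase_deriv] using iteratedDerivBound_cos_add_sin a b 2
  have hstep (m : ℕ) {k k' : ℝ} (hk : 4 ^ m * k ^ 2 / 5 ≤ k') :
      2 ^ m * (|a| + |b|) * (2 ^ m * (k / |ν|) * (k / |ν|)) ≤ k' / |ν| := by
    rw [le_div_iff₀ hν_pos]
    calc 2 ^ m * (|a| + |b|) * (2 ^ m * (k / |ν|) * (k / |ν|)) * |ν|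
        = 4 ^ m * k ^ 2 / 5 * (5 * (|a| + |b|) / |ν|) := by
          rw [show (4 : ℝ) ^ m = 2 ^ m * 2 ^ m by rw [← mul_pow]; norm_num]
          field_simp
      _ ≤ k' * 1 := mul_le_mul hk ((div_le_one hν_pos).mpr h) (by positivity)
          ((by positivity : (0 : ℝ) ≤ 4 ^ m * k ^ 2 / 5).trans hk)
      _ = k' := mul_one k'
  have h₀ : IteratedDerivBound (fun θ => (c θ)⁻¹) 0 (2 / |ν|) := by
    intro j hj θ
    obtain rfl : j = 0 := by omega
    rw [iteratedDeriv_zero, abs_inv, ← one_div, div_le_div_iff₀ (by linarith [hc_ge θ]) hν_pos]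
    linarith [hc_ge θ]
  have h₁ := h₀.inv_succ (A' := 2 / |ν|) (by fun_prop) hc_ne (hc'.mono (by norm_num) le_rfl) le_rfl
    (hstep 0 (by norm_num))
  have h₂ := h₁.inv_succ (A' := 4 / |ν|) (by fun_prop) hc_ne (hc'.mono (by norm_num) le_rfl)
    (by gcongr; norm_num) (hstep 1 (by norm_num))
  exact h₂.inv_succ (by fun_prop) hc_ne hc' (by gcongr; norm_num) (hstep 2 (by norm_num))

end Phase

theorem stmt9_general (ψ : ℝ → ℝ) (hper : Function.Periodic ψ (2 * π))
    (hC5 : ContDiff ℝ 5 (fun θ => Real.sqrt (ψ θ))) :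
    ∃ C > (0 : ℝ), ∀ R : ℝ, 1 ≤ R → ∀ n : ℤ, 10 * R ≤ |(n : ℝ)| →
      ∀ z : ℝ × ℝ, z.1 ^ 2 + z.2 ^ 2 ≤ R ^ 2 →
        ‖(∫ θ in (0 : ℝ)..(2 * π),
            Complex.exp (-(Complex.I * ((z.1 * Real.cos θ + z.2 * Real.sin θ : ℝ) : ℂ)))
              * Complex.exp (Complex.I * (n : ℂ) * (θ : ℂ))
              * (Real.sqrt (ψ θ) : ℂ))‖
          ≤ C / |(n : ℝ)| ^ 3 := by
  set g : ℝ → ℝ := fun θ => Real.sqrt (ψ θ)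
  have hg : ContDiff ℝ 3 g := hC5.of_le (by norm_num)
  have hgper : Function.Periodic g (2 * π) := fun θ => congrArg Real.sqrt (hper θ)
  obtain ⟨M, hM⟩ := exists_iteratedDerivBound_of_periodic hg hgper (by positivity)
  refine ⟨64 ^ 4 * max M 1 * (2 * π), by positivity, fun R hR n hn z hz => ?_⟩
  have hab : 5 * (|z.1| + |z.2|) ≤ |(n : ℝ)| := by
    have h₁ := sq_le_sq.mp (show z.1 ^ 2 ≤ R ^ 2 by nlinarith)
    have h₂ := sq_le_sq.mp (show z.2 ^ 2 ≤ R ^ 2 by nlinarith)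
    rw [abs_of_pos (by linarith : 0 < R)] at h₁ h₂
    linarith
  have hn : (n : ℝ) ≠ 0 := abs_pos.mp (by linarith)
  have hbound := norm_integral_cexp_mul_le (hasDerivAt_phase n z.1 z.2) (phase_deriv_ne_zero hab hn)
    (periodic_cexp_phase z.1 z.2 n) (periodic_phase_deriv n z.1 z.2)
    ((by fun_prop : ContDiff ℝ 3 fun θ => (n : ℝ) + z.1 * Real.sin θ - z.2 * Real.cos θ).inv
      (phase_deriv_ne_zero hab hn))
    (iteratedDerivBound_inv_phase_deriv hab hn) hg hgper (hM.mono le_rfl (le_max_left M 1))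
  convert hbound using 2
  · refine integral_congr fun θ _ => ?_
    rw [← Complex.exp_add]
    congr 2
    push_cast
    ring
  · rw [abs_of_pos Real.two_pi_pos]
    field_simp

/-- decay of the coefficient functions `f_n`: if `ψ` is `2π`-periodic,
positive, and `√ψ` is `C⁵`, then there is `C > 0` (depending only on `ψ`) such that for
every `R ≥ 1`, every integer `n` with `|n| ≥ 10R` and every `z` with `‖z‖ ≤ R`,
`|f_n(z)| ≤ C/|n|³`, where `f_n(z) = ∫₀^{2π} e^{-i z·v_θ} e^{i n θ} √(ψ(θ)) dθ`. -/
theorem stmt9 (ψ : ℝ → ℝ) (hper : Function.Periodic ψ (2 * π)) (hpos : ∀ θ, 0 < ψ θ)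
    (hC5 : ContDiff ℝ 5 (fun θ => Real.sqrt (ψ θ))) :
    ∃ C > (0 : ℝ), ∀ R : ℝ, 1 ≤ R → ∀ n : ℤ, 10 * R ≤ |(n : ℝ)| →
      ∀ z : ℝ × ℝ, z.1 ^ 2 + z.2 ^ 2 ≤ R ^ 2 →
        ‖(∫ θ in (0 : ℝ)..(2 * π),
            Complex.exp (-(Complex.I * ((z.1 * Real.cos θ + z.2 * Real.sin θ : ℝ) : ℂ)))
              * Complex.exp (Complex.I * (n : ℂ) * (θ : ℂ))
              * (Real.sqrt (ψ θ) : ℂ))‖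
          ≤ C / |(n : ℝ)| ^ 3 :=
  stmt9_general ψ hper hC5
end

section
/- Let a ≤ b be reals and let Q₁, Q₂ : [a,b] → ℝ satisfy Q₂(x) ≥ Q₁(x) > 0 for all x ∈ [a,b]. Let y₁, y₂ : [a,b] → ℝ be twice continuously differentiable and satisfy y₁''(x) = Q₁(x)·y₁(x) and y₂''(x) = Q₂(x)·y₂(x) for all x ∈ [a,b]. If y₁(a) ≥ y₂(a), y₁(b) ≥ y₂(b), and y₂(x) ≥ 0 for all x ∈ [a,b], then y₁(x) ≥ y₂(x) for every x ∈ [a,b]. -/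
/-!
Put `u = y₁ - y₂`. Where `u < 0` we have
`u'' = Q₁ u - (Q₂ - Q₁) y₂ ≤ Q₁ u < 0`. If `u` were negative somewhere, its minimum over
`[a, b]` would be negative, hence attained at an interior point `c` with `u''(c) < 0`; by the
second-derivative test `c` would then also be a local maximum, so `u` would be constant near `c`
and `u''(c) = 0`.
-/

open Set Filter Topology

theorem IsLocalMin.deriv_deriv_nonneg {f : ℝ → ℝ} {c : ℝ} (hmin : IsLocalMin f c)
    (hc : ContinuousAt f c) : 0 ≤ deriv (deriv f) c := by
  by_contra! hneg
  have hmax : IsLocalMax f c := isLocalMax_of_deriv_deriv_neg hneg hmin.deriv_eq_zero hc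
  have hconst : f =ᶠ[𝓝 c] fun _ ↦ f c := hmin.mp <| hmax.mono fun _ h₁ h₂ ↦ le_antisymm h₁ h₂
  have hderiv : deriv f =ᶠ[𝓝 c] fun _ ↦ 0 :=
    hconst.eventuallyEq_nhds.mono fun _ h ↦ by rw [h.deriv_eq, deriv_const]
  simp [hderiv.deriv_eq] at hneg

theorem deriv_deriv_eq_of_hasDerivWithinAt {𝕜 F : Type*} [NontriviallyNormedField 𝕜]
    [NormedAddCommGroup F] [NormedSpace 𝕜 F] {f f' f'' : 𝕜 → F} {s : Set 𝕜} {x : 𝕜}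
    (hs : s ∈ 𝓝 x) (hf : ∀ y ∈ s, HasDerivWithinAt f (f' y) s y)
    (hf' : ∀ y ∈ s, HasDerivWithinAt f' (f'' y) s y) : deriv (deriv f) x = f'' x := by
  have hderiv : deriv f =ᶠ[𝓝 x] f' :=
    (eventually_eventually_nhds.2 hs).mono fun y hy ↦
      ((hf y (mem_of_mem_nhds hy)).hasDerivAt hy).deriv
  rw [hderiv.deriv_eq, ((hf' x (mem_of_mem_nhds hs)).hasDerivAt hs).deriv]

theorem nonneg_of_deriv_deriv_neg_of_neg {u : ℝ → ℝ} {a b : ℝ} (hu : ContinuousOn u (Icc a b))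
    (hconc : ∀ x ∈ Ioo a b, u x < 0 → deriv (deriv u) x < 0) (ha : 0 ≤ u a) (hb : 0 ≤ u b) :
    ∀ x ∈ Icc a b, 0 ≤ u x := by
  by_contra! hneg
  obtain ⟨x₀, hx₀, hux₀⟩ := hneg
  obtain ⟨c, hc, hcmin⟩ := isCompact_Icc.exists_isMinOn ⟨x₀, hx₀⟩ hu
  have huc : u c < 0 := (hcmin hx₀).trans_lt hux₀
  have hca : a ≠ c := by rintro rfl; linarith
  have hcb : c ≠ b := by rintro rfl; linarith
  have hc' : c ∈ Ioo a b := ⟨hc.1.lt_of_ne hca, hc.2.lt_of_ne hcb⟩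
  have hnhds : Icc a b ∈ 𝓝 c := Icc_mem_nhds hc'.1 hc'.2
  have := (hcmin.isLocalMin hnhds).deriv_deriv_nonneg (hu.continuousAt hnhds)
  linarith [hconc c hc' huc]

theorem stmt13_general (a b : ℝ) (Q₁ Q₂ : ℝ → ℝ)
    (y₁ y₁' y₁'' y₂ y₂' y₂'' : ℝ → ℝ)
    (hQpos : ∀ x ∈ Set.Icc a b, 0 < Q₁ x)
    (hQle : ∀ x ∈ Set.Icc a b, Q₁ x ≤ Q₂ x)
    (hy₁d : ∀ x ∈ Set.Icc a b, HasDerivWithinAt y₁ (y₁' x) (Set.Icc a b) x)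
    (hy₁dd : ∀ x ∈ Set.Icc a b, HasDerivWithinAt y₁' (y₁'' x) (Set.Icc a b) x)
    (hy₂d : ∀ x ∈ Set.Icc a b, HasDerivWithinAt y₂ (y₂' x) (Set.Icc a b) x)
    (hy₂dd : ∀ x ∈ Set.Icc a b, HasDerivWithinAt y₂' (y₂'' x) (Set.Icc a b) x)
    (hode₁ : ∀ x ∈ Set.Icc a b, y₁'' x = Q₁ x * y₁ x)
    (hode₂ : ∀ x ∈ Set.Icc a b, y₂'' x = Q₂ x * y₂ x)
    (hend_a : y₂ a ≤ y₁ a) (hend_b : y₂ b ≤ y₁ b)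
    (hy₂pos : ∀ x ∈ Set.Icc a b, 0 ≤ y₂ x) :
    ∀ x ∈ Set.Icc a b, y₂ x ≤ y₁ x := by
  set u : ℝ → ℝ := fun x ↦ y₁ x - y₂ x
  have hu : ∀ x ∈ Icc a b, HasDerivWithinAt u (y₁' x - y₂' x) (Icc a b) x :=
    fun x hx ↦ (hy₁d x hx).sub (hy₂d x hx)
  have hu' : ∀ x ∈ Icc a b, HasDerivWithinAt (fun x ↦ y₁' x - y₂' x) (y₁'' x - y₂'' x)
      (Icc a b) x :=
    fun x hx ↦ (hy₁dd x hx).sub (hy₂dd x hx)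
  have hconc : ∀ x ∈ Ioo a b, u x < 0 → deriv (deriv u) x < 0 := by
    intro x hx hux
    have hx' : x ∈ Icc a b := Ioo_subset_Icc_self hx
    rw [deriv_deriv_eq_of_hasDerivWithinAt (Icc_mem_nhds hx.1 hx.2) hu hu', hode₁ x hx',
      hode₂ x hx']
    nlinarith [hQpos x hx', mul_nonneg (sub_nonneg.2 (hQle x hx')) (hy₂pos x hx')]
  intro x hx
  exact sub_nonneg.1 <| nonneg_of_deriv_deriv_neg_of_neg
    (fun x hx ↦ (hu x hx).continuousWithinAt) hconc
    (sub_nonneg.2 hend_a) (sub_nonneg.2 hend_b) x hx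

/-- comparison principle for second-order linear ODEs: suppose
`y₁'' = Q₁ y₁` and `y₂'' = Q₂ y₂` on `[a,b]` with `Q₂ ≥ Q₁ > 0`, `y₁ ≥ y₂` at the two
endpoints and `y₂ ≥ 0` on `[a,b]`. Then `y₁ ≥ y₂` on all of `[a,b]`.
The `C²` regularity of `yᵢ` on `[a,b]` is expressed by providing functions `yᵢ'`,
`yᵢ''` that are derivatives within `[a,b]`, with `yᵢ''` continuous on `[a,b]`. -/
theorem stmt13 (a b : ℝ) (hab : a ≤ b) (Q₁ Q₂ : ℝ → ℝ)
    (y₁ y₁' y₁'' y₂ y₂' y₂'' : ℝ → ℝ)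
    (hQpos : ∀ x ∈ Set.Icc a b, 0 < Q₁ x)
    (hQle : ∀ x ∈ Set.Icc a b, Q₁ x ≤ Q₂ x)
    (hy₁d : ∀ x ∈ Set.Icc a b, HasDerivWithinAt y₁ (y₁' x) (Set.Icc a b) x)
    (hy₁dd : ∀ x ∈ Set.Icc a b, HasDerivWithinAt y₁' (y₁'' x) (Set.Icc a b) x)
    (hy₁c : ContinuousOn y₁'' (Set.Icc a b))
    (hy₂d : ∀ x ∈ Set.Icc a b, HasDerivWithinAt y₂ (y₂' x) (Set.Icc a b) x)
    (hy₂dd : ∀ x ∈ Set.Icc a b, HasDerivWithinAt y₂' (y₂'' x) (Set.Icc a b) x)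
    (hy₂c : ContinuousOn y₂'' (Set.Icc a b))
    (hode₁ : ∀ x ∈ Set.Icc a b, y₁'' x = Q₁ x * y₁ x)
    (hode₂ : ∀ x ∈ Set.Icc a b, y₂'' x = Q₂ x * y₂ x)
    (hend_a : y₂ a ≤ y₁ a) (hend_b : y₂ b ≤ y₁ b)
    (hy₂pos : ∀ x ∈ Set.Icc a b, 0 ≤ y₂ x) :
    ∀ x ∈ Set.Icc a b, y₂ x ≤ y₁ x :=
  stmt13_general a b Q₁ Q₂ y₁ y₁' y₁'' y₂ y₂' y₂'' hQpos hQle hy₁d hy₁dd hy₂d hy₂dd hode₁ hode₂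
    hend_a hend_b hy₂pos
end
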